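/- arXiv:2205.05599 — 9 statements merged into one kernel-verified Lean document; each statement's English description precedes it below -/
import Mathlib

section
/- In the market with firms f1, f2, f3 and workers w1, w2, w3, where f1 accepts only {w1,w2}, f2 accepts only {w2,w3}, f3 accepts only {w1,w3} (each preferring its acceptable set to the empty set), and workers' preferences are w1: f1 ≻ f3, w2: f2 ≻ f1, w3: f3 ≻ f2 (all firms acceptable), no stable matching exists. -/
/-!
Statement 0: In the market with firms f1, f2, f3 and workers w1, w2, w3, where
f1 accepts only {w1,w2}, f2 accepts only {w2,w3}, f3 accepts only {w1,w3}
(each preferring its acceptable set to ∅), and workers' preferences are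
w1: f1 ≻ f3, w2: f2 ≻ f1, w3: f3 ≻ f2 (unlisted firms unacceptable),
no stable matching exists.
-/

namespace Stmt0

/-- Workers and firms are both indexed by `Fin 3`. -/
abbrev Worker := Fin 3
abbrev Firm := Fin 3

/-- The unique (nonempty) acceptable set of each firm. -/
def accSet : Firm → Finset Worker
  | 0 => {0, 1}
  | 1 => {1, 2}
  | 2 => {0, 2}

/-- Each firm ranks its acceptable set above ∅ and every other set below ∅. -/
def frank (f : Firm) (S : Finset Worker) : ℤ :=
  if S = accSet f then 1 else if S = ∅ then 0 else -1

/-- Worker rankings over `Option Firm` (`none` = unmatched); higher is better.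
w1: f1 ≻ f3 ≻ ∅ ≻ f2;  w2: f2 ≻ f1 ≻ ∅ ≻ f3;  w3: f3 ≻ f2 ≻ ∅ ≻ f1. -/
def wrank : Worker → Option Firm → ℤ
  | 0, some 0 => 2
  | 0, some 2 => 1
  | 0, none => 0
  | 0, some 1 => -1
  | 1, some 1 => 2
  | 1, some 0 => 1
  | 1, none => 0
  | 1, some 2 => -1
  | 2, some 2 => 2
  | 2, some 1 => 1
  | 2, none => 0
  | 2, some 0 => -1

/-- The set of workers matched to firm `f` under matching `μ`. -/
def assigned (μ : Worker → Option Firm) (f : Firm) : Finset Worker :=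
  Finset.univ.filter (fun w => μ w = some f)

/-- Individual rationality. -/
def IndRat (μ : Worker → Option Firm) : Prop :=
  (∀ w, wrank w (μ w) ≥ wrank w none) ∧
  (∀ f, ∀ T ⊆ assigned μ f, frank f (assigned μ f) ≥ frank f T)

/-- Firm `f` and a set `S` of workers form a blocking coalition. -/
def Blocks (μ : Worker → Option Firm) (f : Firm) (S : Finset Worker) : Prop :=
  frank f S > frank f (assigned μ f) ∧ ∀ w ∈ S, wrank w (some f) ≥ wrank w (μ w)

/-- Stability. -/
def Stable (μ : Worker → Option Firm) : Prop :=
  IndRat μ ∧ ¬ ∃ f S, Blocks μ f S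

theorem no_stable_matching : ¬ ∃ μ : Worker → Option Firm, Stable μ := by
  simp only [Stable, IndRat, Blocks]
  decide

end Stmt0
end

section
/- If a firm f has a complementary preference, then the union of any two acceptable sets of f is acceptable: if Ch_f(S) = S and Ch_f(S') = S' then Ch_f(S ∪ S') = S ∪ S'. In particular, every complementary preference is additive. -/
/-!
Statement 4: For a firm with a complementary preference, the union of any two
acceptable sets is acceptable; in particular every complementary preference is
additive (the union of two *disjoint* acceptable sets is acceptable).
-/

theorem complementary_union_acceptable {W : Type*} [DecidableEq W]
    (pref : Finset W → Finset W → Prop)    -- `pref A B` : the firm strictly prefers A to B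
    (hirr : ∀ A, ¬ pref A A)
    (htrans : ∀ A B C, pref A B → pref B C → pref A C)
    (htotal : ∀ A B, A ≠ B → pref A B ∨ pref B A)
    (Ch : Finset W → Finset W)             -- the firm's choice function
    (hsub : ∀ S, Ch S ⊆ S)
    (hbest : ∀ S, ∀ T ⊆ S, T ≠ Ch S → pref (Ch S) T)
    (hcomp : ∀ S S', S ⊂ S' → ∀ w, w ∈ Ch S → w ∈ Ch S') :
    (∀ S S', Ch S = S → Ch S' = S' → Ch (S ∪ S') = S ∪ S') ∧
    (∀ S S', Disjoint S S' → Ch S = S → Ch S' = S' → Ch (S ∪ S') = S ∪ S') := by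
  have main : ∀ S S', Ch S = S → Ch S' = S' → Ch (S ∪ S') = S ∪ S' := by
    intro S S' hS hS'
    have hsub1 : S ⊆ S ∪ S' := Finset.subset_union_left
    have hsub2 : S' ⊆ S ∪ S' := Finset.subset_union_right
    apply Finset.Subset.antisymm (hsub _)
    intro w hw
    rcases Finset.mem_union.mp hw with h | h
    · rcases eq_or_ne S (S ∪ S') with he | hne
      · rw [← he, hS]; exact h
      · exact hcomp S (S ∪ S') (ssubset_of_subset_of_ne hsub1 hne) w (by rw [hS]; exact h)
    · rcases eq_or_ne S' (S ∪ S') with he | hne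
      · rw [← he, hS']; exact h
      · exact hcomp S' (S ∪ S') (ssubset_of_subset_of_ne hsub2 hne) w (by rw [hS']; exact h)
  exact ⟨main, fun S S' _ => main S S'⟩
end

section
/- Let a finite family 𝒜 of subsets of W be given. If every cycle of odd length k ≥ 3 in the hypergraph (W, 𝒜*) (where 𝒜* is the family of non-singleton members of 𝒜) contains an edge containing at least three distinct vertices of the cycle, then the incidence matrix of 𝒜 (workers as rows, sets as columns) is balanced. -/
/-!
Statement 8: If every odd cycle (length ≥ 3) in the hypergraph of non-singleton
members of a finite family 𝒜 of subsets of W has an edge containing at least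
three vertices of the cycle, then the incidence matrix of 𝒜 is balanced.
-/

/-- A 0-1 matrix is balanced: no square submatrix of odd order `k ≥ 3` with
exactly two 1s in each row and each column. -/
def IsBalanced {α β : Type*} [Fintype α] [Fintype β] (M : Matrix α β ℚ) : Prop :=
  ∀ (k : ℕ), 3 ≤ k → Odd k → ∀ (r : Fin k → α) (c : Fin k → β),
    Function.Injective r → Function.Injective c →
    ¬ ((∀ i, (Finset.univ.filter fun j => M (r i) (c j) = 1).card = 2) ∧
       (∀ j, (Finset.univ.filter fun i => M (r i) (c j) = 1).card = 2))

/-- A cycle of length `k` in the hypergraph with edge family `ℰ`: distinct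
vertices `w i`, distinct edges `A i ∈ ℰ`, with `w i, w (i+1) ∈ A i` (cyclically). -/
def IsCycle {W : Type*} [DecidableEq W] (ℰ : Finset (Finset W)) (k : ℕ)
    (w : Fin k → W) (A : Fin k → Finset W) : Prop :=
  Function.Injective w ∧ Function.Injective A ∧ (∀ i, A i ∈ ℰ) ∧
  ∀ i : Fin k, w i ∈ A i ∧ w ⟨(i + 1) % k, Nat.mod_lt _ (lt_of_le_of_lt (Nat.zero_le _) i.isLt)⟩ ∈ A i

private lemma multiset_even_sum (s : Multiset ℕ) (h : ∀ x ∈ s, Even x) : Even s.sum := by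
  induction s using Multiset.induction_on with
  | empty => simp
  | cons a s ih =>
    simp only [Multiset.sum_cons]
    exact Even.add (h a (by simp)) (ih fun x hx => h x (by simp [hx]))

theorem odd_cycle_condition_implies_balanced {W : Type*} [Fintype W] [DecidableEq W]
    (𝒜 : Finset (Finset W)) :
    -- every odd cycle of length ≥ 3 among the non-singleton members of 𝒜
    -- has an edge containing at least three vertices of the cycle
    (∀ (k : ℕ), 3 ≤ k → Odd k → ∀ (w : Fin k → W) (A : Fin k → Finset W),
      IsCycle (𝒜.filter fun S => 2 ≤ S.card) k w A →
      ∃ i : Fin k, 3 ≤ (Finset.univ.filter fun j => w j ∈ A i).card) →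
    IsBalanced (Matrix.of fun (x : W) (S : {S : Finset W // S ∈ 𝒜}) =>
      (if x ∈ S.1 then 1 else 0 : ℚ)) := by
  classical
  intro hyp k hk3 hkodd r c hrinj hcinj hbad
  obtain ⟨hrow, hcol⟩ := hbad
  have hent : ∀ i j : Fin k, (Matrix.of fun (x : W) (S : {S : Finset W // S ∈ 𝒜}) =>
      (if x ∈ S.1 then 1 else 0 : ℚ)) (r i) (c j) = 1 ↔ r i ∈ (c j).1 := by
    intro i j
    simp only [Matrix.of_apply]
    split <;> simp_all
  set J : Fin k → Finset (Fin k) := fun i => Finset.univ.filter fun j => r i ∈ (c j).1 with hJdef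
  set I : Fin k → Finset (Fin k) := fun j => Finset.univ.filter fun i => r i ∈ (c j).1 with hIdef
  have hmemJ : ∀ i j : Fin k, j ∈ J i ↔ r i ∈ (c j).1 := by
    intro i j; simp [hJdef]
  have hmemI : ∀ i j : Fin k, i ∈ I j ↔ r i ∈ (c j).1 := by
    intro i j; simp [hIdef]
  have hJcard : ∀ i, (J i).card = 2 := by
    intro i; rw [← hrow i]
    congr 1
    exact Finset.filter_congr fun j _ => (hent i j).symm
  have hIcard : ∀ j, (I j).card = 2 := by
    intro j; rw [← hcol j]
    congr 1
    exact Finset.filter_congr fun i _ => (hent i j).symm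
  -- Hall's condition and a system of distinct representatives f
  have hall : ∀ s : Finset (Fin k), s.card ≤ (s.biUnion J).card := by
    intro s
    by_contra hlt
    push_neg at hlt
    have hcardsig : (s.sigma J).card = 2 * s.card := by
      rw [Finset.card_sigma]
      rw [Finset.sum_congr rfl fun i _ => hJcard i]
      simp [Finset.sum_const, mul_comm]
    have hmaps : ∀ p ∈ s.sigma J, p.2 ∈ s.biUnion J := by
      intro p hp
      rw [Finset.mem_sigma] at hp
      exact Finset.mem_biUnion.mpr ⟨p.1, hp.1, hp.2⟩
    have hmul : (s.biUnion J).card * 2 < (s.sigma J).card := by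
      rw [hcardsig]; omega
    obtain ⟨j, -, hj⟩ :=
      Finset.exists_lt_card_fiber_of_mul_lt_card_of_maps_to hmaps hmul
    have hinj : ((s.sigma J).filter fun p => p.2 = j).card ≤ (I j).card := by
      apply Finset.card_le_card_of_injOn (fun p => p.1)
      · intro p hp
        rw [Finset.mem_coe, Finset.mem_filter, Finset.mem_sigma] at hp
        rw [Finset.mem_coe, hmemI]
        rw [← hp.2]
        exact (hmemJ p.1 p.2).mp hp.1.2
      · intro p hp q hq h1
        rw [Finset.mem_coe, Finset.mem_filter] at hp hq
        exact Sigma.ext h1 (by rw [hp.2, hq.2])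
    rw [hIcard j] at hinj
    omega
  obtain ⟨f, hfinj, hfmem⟩ := (Finset.all_card_le_biUnion_card_iff_exists_injective J).mp hall
  have hfbij : Function.Bijective f := (Finite.injective_iff_bijective).mp hfinj
  set e : Equiv.Perm (Fin k) := Equiv.ofBijective f hfbij with hedef
  have he : ∀ i, e i = f i := fun i => rfl
  -- the other column g i of row i
  have hsingle : ∀ i, ∃ a, (J i).erase (f i) = {a} := by
    intro i
    apply Finset.card_eq_one.mp
    rw [Finset.card_erase_of_mem (hfmem i), hJcard i]
  choose g hgdef using hsingle
  have hgJ : ∀ i, g i ∈ J i := by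
    intro i
    have : g i ∈ (J i).erase (f i) := by rw [hgdef i]; simp
    exact Finset.mem_of_mem_erase this
  have hgne : ∀ i, g i ≠ f i := by
    intro i
    have : g i ∈ (J i).erase (f i) := by rw [hgdef i]; simp
    exact (Finset.mem_erase.mp this).1
  have hginj : Function.Injective g := by
    intro i i' h
    by_contra hne
    have hi : i ∈ I (g i) := (hmemI _ _).mpr ((hmemJ _ _).mp (hgJ i))
    have hi' : i' ∈ I (g i) := (hmemI _ _).mpr ((hmemJ _ _).mp (by rw [h]; exact hgJ i'))
    have hfi0 : f (e.symm (g i)) = g i := by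
      have := e.apply_symm_apply (g i)
      rwa [he] at this
    have hi0mem : e.symm (g i) ∈ I (g i) := by
      have h1 := hfmem (e.symm (g i))
      rw [hfi0] at h1
      exact (hmemI _ _).mpr ((hmemJ _ _).mp h1)
    have h01 : e.symm (g i) ≠ i := by
      intro hcon
      apply hgne i
      rw [← hfi0]
      exact congrArg f hcon
    have h02 : e.symm (g i) ≠ i' := by
      intro hcon
      apply hgne i'
      rw [← h, ← hfi0]
      exact congrArg f hcon
    have hsub : ({i, i', e.symm (g i)} : Finset (Fin k)) ⊆ I (g i) := by
      intro a ha
      simp only [Finset.mem_insert, Finset.mem_singleton] at ha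
      rcases ha with rfl | rfl | rfl <;> assumption
    have hc3 : ({i, i', e.symm (g i)} : Finset (Fin k)).card = 3 := by
      rw [Finset.card_insert_of_notMem (by simp [hne, Ne.symm h01]),
        Finset.card_insert_of_notMem (by simp [Ne.symm h02])]
      simp
    have := Finset.card_le_card hsub
    rw [hc3, hIcard (g i)] at this
    omega
  have hgbij : Function.Bijective g := (Finite.injective_iff_bijective).mp hginj
  -- the permutation σ with f (σ i) = g i
  set σ : Equiv.Perm (Fin k) := (Equiv.ofBijective g hgbij).trans e.symm with hσdef
  have hfσ : ∀ i, f (σ i) = g i := by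
    intro i
    have : σ i = e.symm (g i) := rfl
    rw [this, ← he, e.apply_symm_apply]
  have hσfix : ∀ i, σ i ≠ i := by
    intro i hcon
    apply hgne i
    rw [← hfσ i, hcon]
  have hsupp : σ.support = Finset.univ :=
    Finset.eq_univ_iff_forall.mpr fun i => Equiv.Perm.mem_support.mpr (hσfix i)
  have hsum : σ.cycleType.sum = k := by
    rw [Equiv.Perm.sum_cycleType, hsupp, Finset.card_univ, Fintype.card_fin]
  -- an odd cycle length m ≥ 3
  obtain ⟨m, hmmem, hmodd⟩ : ∃ m ∈ σ.cycleType, Odd m := by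
    by_contra hcon
    push_neg at hcon
    simp only [Nat.not_odd_iff_even] at hcon
    have := multiset_even_sum _ hcon
    rw [hsum] at this
    exact (Nat.not_even_iff_odd.mpr hkodd) this
  have hm2 : 2 ≤ m := Equiv.Perm.two_le_of_mem_cycleType hmmem
  have hm3 : 3 ≤ m := by
    rcases hmodd with ⟨t, rfl⟩
    omega
  -- extract the cycle of length m
  rw [Equiv.Perm.cycleType_def, Multiset.mem_map] at hmmem
  obtain ⟨cyc, hcycmem, hcyccard⟩ := hmmem
  rw [← Finset.mem_def] at hcycmem
  have hcyccycle : cyc.IsCycle := (Equiv.Perm.mem_cycleFactorsFinset_iff.mp hcycmem).1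
  have hcycord : orderOf cyc = m := by
    rw [hcyccycle.orderOf]
    exact hcyccard
  obtain ⟨x, hx⟩ : ∃ x, x ∈ cyc.support := by
    apply Finset.card_pos.mp
    simp only [Function.comp_apply] at hcyccard
    rw [hcyccard]; omega
  have hcycOf : cyc = σ.cycleOf x := Equiv.Perm.cycle_is_cycleOf hx hcycmem
  have hcycx : cyc x ≠ x := Equiv.Perm.mem_support.mp hx
  have hpow : ∀ n : ℕ, (cyc ^ n) x = (σ ^ n) x := by
    intro n
    rw [hcycOf]
    exact Equiv.Perm.cycleOf_pow_apply_self σ x n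
  -- injectivity of the orbit map on [0, m)
  have horbinj : ∀ a b : ℕ, a < m → b < m → (σ ^ a) x = (σ ^ b) x → a = b := by
    have key : ∀ a b : ℕ, a ≤ b → b < m → (σ ^ a) x = (σ ^ b) x → a = b := by
      intro a b hab hbm h
      by_contra hne
      have hd : 0 < b - a := by omega
      have : (cyc ^ a) ((cyc ^ (b - a)) x) = (cyc ^ a) x := by
        rw [← Equiv.Perm.mul_apply, ← pow_add]
        rw [Nat.add_sub_cancel' hab]
        rw [hpow, hpow, h]
      have hfix' : (cyc ^ (b - a)) x = x := (cyc ^ a).injective this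
      have hone : cyc ^ (b - a) = 1 := (hcyccycle.pow_eq_one_iff' hcycx).mpr hfix'
      have := orderOf_dvd_of_pow_eq_one hone
      rw [hcycord] at this
      have := Nat.le_of_dvd hd this
      omega
    intro a b ha hb h
    rcases le_total a b with hab | hab
    · exact key a b hab hb h
    · exact (key b a hab ha h.symm).symm
  have hwrap : (σ ^ m) x = x := by
    rw [← hpow, ← hcycord, pow_orderOf_eq_one, Equiv.Perm.one_apply]
  -- build the hypergraph cycle
  set pt : ℕ → Fin k := fun t => (σ ^ t) x with hptdef
  set w : Fin m → W := fun t => r (pt t) with hwdef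
  set A : Fin m → Finset W := fun t => (c (g (pt t))).1 with hAdef
  have hptsucc : ∀ t : ℕ, pt (t + 1) = σ (pt t) := by
    intro t
    simp only [hptdef, pow_succ', Equiv.Perm.mul_apply]
  have hptinj : ∀ t t' : Fin m, pt t = pt t' → t = t' := by
    intro t t' h
    exact Fin.ext (horbinj t t' t.isLt t'.isLt h)
  have hmemA : ∀ t : ℕ, r (pt t) ∈ (c (g (pt t))).1 ∧ r (pt (t + 1)) ∈ (c (g (pt t))).1 := by
    intro t
    constructor
    · exact (hmemJ (pt t) (g (pt t))).mp (hgJ (pt t))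
    · have : g (pt t) ∈ J (pt (t + 1)) := by
        rw [hptsucc, ← hfσ]
        exact hfmem (σ (pt t))
      exact (hmemJ (pt (t + 1)) (g (pt t))).mp this
  have hcycle : IsCycle (𝒜.filter fun S => 2 ≤ S.card) m w A := by
    refine ⟨?_, ?_, ?_, ?_⟩
    · intro t t' h
      exact hptinj t t' (hrinj h)
    · intro t t' h
      apply hptinj t t'
      apply hginj
      exact hcinj (Subtype.ext h)
    · intro t
      rw [Finset.mem_filter]
      refine ⟨(c (g (pt t))).2, ?_⟩
      have hne : r (pt (↑t + 1)) ≠ r (pt ↑t) := by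
        intro h
        have := hrinj h
        rw [hptsucc] at this
        exact hσfix (pt ↑t) this
      have : 1 < (c (g (pt ↑t))).1.card :=
        Finset.one_lt_card.mpr ⟨r (pt ↑t), (hmemA ↑t).1, r (pt (↑t + 1)), (hmemA ↑t).2,
          Ne.symm hne⟩
      exact this
    · intro t
      constructor
      · exact (hmemA t).1
      · show r (pt ((↑t + 1) % m)) ∈ (c (g (pt ↑t))).1
        have : pt ((↑t + 1) % m) = pt (↑t + 1) := by
          rcases Nat.lt_or_ge (↑t + 1) m with hlt | hge
          · rw [Nat.mod_eq_of_lt hlt]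
          · have hteq : (↑t : ℕ) + 1 = m := by omega
            rw [hteq, Nat.mod_self]
            simp only [hptdef, pow_zero, Equiv.Perm.one_apply]
            rw [hwrap]
        rw [this]
        exact (hmemA ↑t).2
  obtain ⟨t, ht⟩ := hyp m hm3 hmodd w A hcycle
  -- the edge A t contains at most 2 vertices of the cycle
  have hle : (Finset.univ.filter fun j => w j ∈ A t).card ≤ (I (g (pt t))).card := by
    apply Finset.card_le_card_of_injOn (fun s : Fin m => pt ↑s)
    · intro s hs
      rw [Finset.mem_coe, Finset.mem_filter] at hs
      exact (hmemI (pt ↑s) (g (pt ↑t))).mpr hs.2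
    · intro s _ s' _ h
      exact hptinj s s' h
  rw [hIcard] at hle
  omega
end

section
/- In a technology tree in which every worker engages in only a neighbour of upgrades, there is no cycle (w¹, S¹, w², S², …, w^k, S^k, w¹) of length k ≥ 3 among the technology worker-sets {W^v : v ∈ V} in which no set S^i contains more than two of the workers w¹,…,w^k. Consequently the sets {W^v : v ∈ V} form a totally balanced (hence balanced) 0-1 incidence matrix. -/
/-- A 0-1 matrix is totally balanced: it contains no submatrix which is the
incidence matrix of a cycle of length ≥ 3 (rows = vertices, columns = edges,
vertex `i` lying on edges `i-1` and `i`, cyclically). -/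
def IsTotallyBalanced {α β : Type*} [Fintype α] [Fintype β] (M : Matrix α β ℚ) : Prop :=
  ∀ (k : ℕ), 3 ≤ k → ∀ (r : Fin k → α) (c : Fin k → β),
    Function.Injective r → Function.Injective c →
    ¬ (∀ i j : Fin k, M (r i) (c j) = 1 ↔ ((i : ℕ) = j ∨ (i : ℕ) = ((j : ℕ) + 1) % k))

/-- A technology tree: a rooted tree (given by the parent function, edges point
away from the root), a worker set `Wv v` for each technology `v` growing
strictly along edges, and for each vertex a strict total order on the edges
leaving it (an edge leaving `p` is identified with its endpoint, a child of `p`). -/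
structure TechTree (V W : Type*) [DecidableEq W] where
  root : V
  parent : V → V
  parent_root : parent root = root
  reach : ∀ v : V, ∃ n : ℕ, parent^[n] v = root
  Wv : V → Finset W
  W_root : Wv root = ∅
  W_mono : ∀ v, v ≠ root → Wv (parent v) ⊂ Wv v
  lt : V → V → V → Prop  -- `lt p c c'` : among the edges leaving `p`, edge `pc` precedes `pc'`
  lt_irrefl : ∀ p c, ¬ lt p c c
  lt_trans : ∀ p a b c, lt p a b → lt p b c → lt p a c
  lt_total : ∀ p c c', parent c = p → parent c' = p → c ≠ c' → lt p c c' ∨ lt p c' c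

namespace TechTree

variable {V W : Type*} [DecidableEq W]

/-- Worker `w` engages in the upgrade (edge) leading into `v`, i.e.
`w ∈ W^e = Wv v \ Wv (parent v)`. -/
def Engages (T : TechTree V W) (w : W) (v : V) : Prop :=
  v ≠ T.root ∧ w ∈ T.Wv v \ T.Wv (T.parent v)

/-- Every worker engages only in a neighbour of upgrades: all the upgrades she
engages in leave a single vertex and are consecutive in that vertex's order. -/
def NeighbourCondition (T : TechTree V W) : Prop :=
  (∀ w v v', T.Engages w v → T.Engages w v' → T.parent v = T.parent v') ∧
  (∀ w v₁ v₂ v₃, T.Engages w v₁ → T.Engages w v₃ → v₂ ≠ T.root →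
    T.parent v₂ = T.parent v₁ →
    T.lt (T.parent v₁) v₁ v₂ → T.lt (T.parent v₁) v₂ v₃ → T.Engages w v₂)

end TechTree


namespace TechTree

variable {V W : Type*} [DecidableEq W]

variable (T : TechTree V W)

def anc (u v : V) : Prop := ∃ n : ℕ, T.parent^[n] v = u

lemma anc_refl (v : V) : T.anc v v := ⟨0, rfl⟩

lemma anc_parent (v : V) : T.anc (T.parent v) v := ⟨1, rfl⟩

lemma anc_trans {a b c : V} (h1 : T.anc a b) (h2 : T.anc b c) : T.anc a c := by
  obtain ⟨n, rfl⟩ := h2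
  obtain ⟨m, rfl⟩ := h1
  exact ⟨m + n, (Function.iterate_add_apply _ m n c)⟩

lemma eq_root_of_parent_eq {x : V} (h : T.parent x = x) : x = T.root := by
  obtain ⟨n, hn⟩ := T.reach x
  rw [Function.iterate_fixed h n] at hn; exact hn

open Classical in
noncomputable def depth (v : V) : ℕ := Nat.find (T.reach v)

open Classical in
lemma depth_spec (v : V) : T.parent^[T.depth v] v = T.root := Nat.find_spec (T.reach v)

open Classical in
lemma depth_le {v : V} {n : ℕ} (h : T.parent^[n] v = T.root) : T.depth v ≤ n :=
  Nat.find_le h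

lemma eq_root_of_depth_zero {v : V} (h : T.depth v = 0) : v = T.root := by
  have h2 := T.depth_spec v; rw [h] at h2; exact h2

lemma depth_parent_lt {v : V} (h : v ≠ T.root) : T.depth (T.parent v) < T.depth v := by
  have hd := T.depth_spec v
  have h0 : T.depth v ≠ 0 := fun h0 => h (T.eq_root_of_depth_zero h0)
  obtain ⟨n, hn⟩ := Nat.exists_eq_succ_of_ne_zero h0
  have hiter : T.parent^[n] (T.parent v) = T.root := by
    rw [← Function.iterate_succ_apply, ← hn]; exact hd
  calc T.depth (T.parent v) ≤ n := T.depth_le hiter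
  _ < T.depth v := by omega

lemma depth_parent_le (v : V) : T.depth (T.parent v) ≤ T.depth v := by
  by_cases h : v = T.root
  · subst h; rw [T.parent_root]
  · exact (T.depth_parent_lt h).le

lemma depth_iterate_le (n : ℕ) (v : V) : T.depth (T.parent^[n] v) ≤ T.depth v := by
  induction n with
  | zero => exact le_rfl
  | succ n ih =>
    rw [Function.iterate_succ_apply']
    exact (T.depth_parent_le _).trans ih

lemma depth_le_of_anc {u v : V} (h : T.anc u v) : T.depth u ≤ T.depth v := by
  obtain ⟨n, rfl⟩ := h; exact T.depth_iterate_le n v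

lemma depth_lt_of_anc {u v : V} (h : T.anc u v) (hne : u ≠ v) : T.depth u < T.depth v := by
  obtain ⟨n, rfl⟩ := h
  have hv : v ≠ T.root := by
    rintro rfl; exact hne (Function.iterate_fixed T.parent_root n)
  cases n with
  | zero => exact absurd rfl hne
  | succ n =>
    rw [Function.iterate_succ_apply]
    exact lt_of_le_of_lt (T.depth_iterate_le n (T.parent v)) (T.depth_parent_lt hv)

lemma anc_antisymm {u v : V} (h1 : T.anc u v) (h2 : T.anc v u) : u = v := by
  by_contra hne
  have l1 := T.depth_lt_of_anc h1 hne
  have l2 := T.depth_lt_of_anc h2 (Ne.symm hne)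
  omega

lemma anc_total {u u' v : V} (h : T.anc u v) (h' : T.anc u' v) :
    T.anc u u' ∨ T.anc u' u := by
  obtain ⟨n, hn⟩ := h; obtain ⟨n', hn'⟩ := h'
  rcases le_total n n' with hle | hle
  · right
    exact ⟨n' - n, by rw [← hn, ← Function.iterate_add_apply, Nat.sub_add_cancel hle, hn']⟩
  · left
    exact ⟨n - n', by rw [← hn', ← Function.iterate_add_apply, Nat.sub_add_cancel hle, hn]⟩

lemma anc_of_depth_le {u u' v : V} (h : T.anc u v) (h' : T.anc u' v)
    (hd : T.depth u' ≤ T.depth u) : T.anc u' u := by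
  rcases T.anc_total h h' with hc | hc
  · rcases eq_or_ne u u' with rfl | hne
    · exact T.anc_refl u
    · have := T.depth_lt_of_anc hc hne
      omega
  · exact hc

lemma depth_child {v : V} (h : v ≠ T.root) : T.depth v = T.depth (T.parent v) + 1 := by
  have h1 := T.depth_parent_lt h
  have h2 : T.depth v ≤ T.depth (T.parent v) + 1 :=
    T.depth_le (by rw [Function.iterate_succ_apply]; exact T.depth_spec (T.parent v))
  omega

lemma not_anc_sibling {c c' : V} (hp : T.parent c = T.parent c') (hr : c ≠ T.root)
    (hne : c ≠ c') : ¬ T.anc c c' := by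
  rintro ⟨n, hn⟩
  cases n with
  | zero => exact hne hn.symm
  | succ n =>
    have h1 : T.anc c (T.parent c') := ⟨n, by rw [← Function.iterate_succ_apply]; exact hn⟩
    have h2 : T.anc (T.parent c') c := by rw [← hp]; exact T.anc_parent c
    have heq : c = T.parent c' := T.anc_antisymm h1 h2
    exact hr (T.eq_root_of_parent_eq (hp.trans heq.symm))

lemma Wv_subset_of_anc {u v : V} (h : T.anc u v) : T.Wv u ⊆ T.Wv v := by
  obtain ⟨n, rfl⟩ := h
  induction n with
  | zero => exact subset_rfl
  | succ n ih =>
    rw [Function.iterate_succ_apply']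
    refine subset_trans ?_ ih
    by_cases hx : T.parent^[n] v = T.root
    · rw [hx, T.parent_root]
    · exact (T.W_mono _ hx).subset

lemma mem_Wv_of_engages {w : W} {c v : V} (h : T.Engages w c) (ha : T.anc c v) :
    w ∈ T.Wv v := T.Wv_subset_of_anc ha ((Finset.mem_sdiff.mp h.2).1)

lemma exists_engages_aux {w : W} : ∀ (n : ℕ) (v : V), T.depth v ≤ n → w ∈ T.Wv v →
    ∃ c, T.Engages w c ∧ T.anc c v := by
  intro n
  induction n with
  | zero =>
    intro v hd hw
    have hv : v = T.root := T.eq_root_of_depth_zero (Nat.le_zero.mp hd)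
    rw [hv, T.W_root] at hw
    exact absurd hw (Finset.notMem_empty w)
  | succ n ih =>
    intro v hd hw
    have hv : v ≠ T.root := by
      rintro rfl; rw [T.W_root] at hw; exact absurd hw (Finset.notMem_empty w)
    by_cases hp : w ∈ T.Wv (T.parent v)
    · obtain ⟨c, hc, hanc⟩ := ih (T.parent v) (by have := T.depth_parent_lt hv; omega) hp
      exact ⟨c, hc, T.anc_trans hanc (T.anc_parent v)⟩
    · exact ⟨v, ⟨hv, Finset.mem_sdiff.mpr ⟨hw, hp⟩⟩, T.anc_refl v⟩

lemma exists_engages {w : W} {v : V} (hw : w ∈ T.Wv v) :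
    ∃ c, T.Engages w c ∧ T.anc c v := T.exists_engages_aux (T.depth v) v le_rfl hw


end TechTree

lemma other_of_card_two {α : Type*} [DecidableEq α] {s : Finset α} (h : s.card = 2) {a : α}
    (ha : a ∈ s) : ∃ b ∈ s, b ≠ a ∧ ∀ x ∈ s, x = a ∨ x = b := by
  obtain ⟨u, v, huv, rfl⟩ := Finset.card_eq_two.mp h
  rcases Finset.mem_insert.mp ha with rfl | ha'
  · refine ⟨v, by simp, fun h' => huv h'.symm, ?_⟩
    intro x hx
    rcases Finset.mem_insert.mp hx with rfl | hx
    · exact Or.inl rfl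
    · exact Or.inr (Finset.mem_singleton.mp hx)
  · have hav : a = v := Finset.mem_singleton.mp ha'
    subst hav
    refine ⟨u, by simp, fun h' => huv h', ?_⟩
    intro x hx
    rcases Finset.mem_insert.mp hx with rfl | hx
    · exact Or.inr rfl
    · exact Or.inl (Finset.mem_singleton.mp hx)

lemma cycle_walk {E : Type*} [Finite E] (ρ σ : E → E)
    (hρ2 : ∀ x, ρ (ρ x) = x) (hσ2 : ∀ x, σ (σ x) = x)
    (hρ1 : ∀ x, ρ x ≠ x) (hσ1 : ∀ x, σ x ≠ x) (e₀ : E) :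
    ∃ (m : ℕ) (u : ℕ → E), 0 < m ∧ u 0 = e₀ ∧
      (∀ n, u (n + 1) = if n % 2 = 0 then σ (u n) else ρ (u n)) ∧
      u (2 * m) = u 0 ∧
      (∀ a b, a < b → b < 2 * m → u a ≠ u b) := by
  classical
  set π : E → E := fun x => ρ (σ x) with hπ
  have hσinj : Function.Injective σ := Function.Involutive.injective hσ2
  have hρinj : Function.Injective ρ := Function.Involutive.injective hρ2
  have hπinj : Function.Injective π := fun a b h => hσinj (hρinj h)
  have hper : ∃ m, 0 < m ∧ π^[m] e₀ = e₀ := by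
    obtain ⟨a, b, hne, heq⟩ := Finite.exists_ne_map_eq_of_infinite (fun n : ℕ => π^[n] e₀)
    have key : ∀ a b : ℕ, a < b → π^[a] e₀ = π^[b] e₀ → ∃ m, 0 < m ∧ π^[m] e₀ = e₀ := by
      intro a b hab heq
      refine ⟨b - a, by omega, ?_⟩
      apply Function.Injective.iterate hπinj a
      rw [← Function.iterate_add_apply, show a + (b - a) = b by omega]
      exact heq.symm
    rcases lt_or_gt_of_ne hne with h | h
    · exact key a b h heq
    · exact key b a h heq.symm
  set m := Nat.find hper with hmdef
  obtain ⟨hm0, hmspec⟩ := Nat.find_spec hper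
  have hmin : ∀ j, 0 < j → π^[j] e₀ = e₀ → m ≤ j := by
    intro j hj hspec
    by_contra hcon
    exact Nat.find_min hper (by omega) ⟨hj, hspec⟩
  set u : ℕ → E := fun n => Nat.rec e₀ (fun n x => if n % 2 = 0 then σ x else ρ x) n with hu
  have hstep : ∀ n, u (n + 1) = if n % 2 = 0 then σ (u n) else ρ (u n) := fun n => rfl
  have h2n : ∀ n, u (2 * n) = π^[n] e₀ := by
    intro n
    induction n with
    | zero => rfl
    | succ n ih =>
      have e1 : u (2 * n + 1) = σ (u (2 * n)) := by
        rw [hstep]; rw [if_pos (by omega)]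
      have e2 : u (2 * n + 2) = ρ (u (2 * n + 1)) := by
        rw [hstep]; rw [if_neg (by omega)]
      have h22 : 2 * (n + 1) = 2 * n + 2 := by ring
      rw [h22, e2, e1, ih, Function.iterate_succ_apply' π]
  have hback : ∀ n, u n = if n % 2 = 0 then σ (u (n + 1)) else ρ (u (n + 1)) := by
    intro n
    by_cases h : n % 2 = 0
    · rw [if_pos h, hstep n, if_pos h, hσ2]
    · rw [if_neg h, hstep n, if_neg h, hρ2]
  refine ⟨m, u, hm0, rfl, hstep, by rw [h2n m, hmspec]; rfl, ?_⟩
  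
  intro a b hab hb2m hEq
  have hgap : ∃ g, 0 < g ∧ ∃ a', a' + g < 2 * m ∧ u a' = u (a' + g) := by
    refine ⟨b - a, by omega, a, by omega, ?_⟩
    rw [show a + (b - a) = b by omega]; exact hEq
  set g := Nat.find hgap with hgdef
  obtain ⟨hg0, a', ha'lt, ha'eq⟩ := Nat.find_spec hgap
  rw [← hgdef] at hg0 ha'lt ha'eq
  have hgmin : ∀ j, 0 < j → (∃ a', a' + j < 2 * m ∧ u a' = u (a' + j)) → g ≤ j := by
    intro j hj hspec
    by_contra hcon
    exact Nat.find_min hgap (by omega) ⟨hj, hspec⟩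
  by_cases hpar : g % 2 = 0
  · -- even gap: propagate to 0
    have hprop : ∀ s, s ≤ a' → u (a' - s) = u (a' - s + g) := by
      intro s
      induction s with
      | zero => intro _; simpa using ha'eq
      | succ s ih =>
        intro hs
        have ihh := ih (by omega)
        set n := a' - (s + 1) with hndef
        have hn1 : a' - s = n + 1 := by omega
        have hueq : u (n + 1) = u (n + g + 1) := by
          rw [← hn1, show n + g + 1 = a' - s + g by omega]
          exact ihh
        have hp2 : (n + g) % 2 = n % 2 := by omega
        rw [hback n, hback (n + g), hp2, hueq]
    have hfinal := hprop a' le_rfl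
    simp only [Nat.sub_self, Nat.zero_add, zero_add] at hfinal
    obtain ⟨g', hg'⟩ : ∃ g', g = 2 * g' := ⟨g / 2, by omega⟩
    have hππ : π^[g'] e₀ = e₀ := by
      have h0 := hfinal
      rw [hg', h2n g'] at h0
      exact h0.symm
    have := hmin g' (by omega) hππ
    omega
  · -- odd gap
    rcases Nat.lt_or_ge g 2 with hg2 | hg2
    · -- g = 1
      have hg1 : g = 1 := by omega
      rw [hg1] at ha'eq
      rw [hstep a'] at ha'eq
      by_cases h : a' % 2 = 0
      · rw [if_pos h] at ha'eq; exact hσ1 (u a') ha'eq.symm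
      · rw [if_neg h] at ha'eq; exact hρ1 (u a') ha'eq.symm
    · -- g ≥ 3
      have hkey : u (a' + 1) = u (a' + 1 + (g - 2)) := by
        by_cases h : a' % 2 = 0
        · have h1 : u (a' + 1) = σ (u a') := by rw [hstep, if_pos h]
          have h2 : u (a' + g) = σ (u (a' + g - 1)) := by
            have hh := hstep (a' + g - 1)
            rw [show a' + g - 1 + 1 = a' + g by omega] at hh
            rw [hh, if_pos (by omega)]
          have h3 : u (a' + g - 1) = σ (u a') := by
            have hh := congrArg σ h2
            rw [hσ2] at hh
            rw [← hh, ha'eq]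
          rw [show a' + 1 + (g - 2) = a' + g - 1 by omega, h1, h3]
        · have h1 : u (a' + 1) = ρ (u a') := by rw [hstep, if_neg h]
          have h2 : u (a' + g) = ρ (u (a' + g - 1)) := by
            have hh := hstep (a' + g - 1)
            rw [show a' + g - 1 + 1 = a' + g by omega] at hh
            rw [hh, if_neg (by omega)]
          have h3 : u (a' + g - 1) = ρ (u a') := by
            have hh := congrArg ρ h2
            rw [hρ2] at hh
            rw [← hh, ha'eq]
          rw [show a' + 1 + (g - 2) = a' + g - 1 by omega, h1, h3]
      have := hgmin (g - 2) (by omega) ⟨a' + 1, by omega, hkey⟩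
      omega

open Fin.NatCast in
theorem techTree_partA {V W : Type*} [DecidableEq W]
    (T : TechTree V W) (hnb : T.NeighbourCondition) :
    ¬ ∃ (k : ℕ) (_ : 3 ≤ k) (w : Fin k → W) (vs : Fin k → V),
        Function.Injective w ∧ Function.Injective (fun i => T.Wv (vs i)) ∧
        (∀ i : Fin k, w i ∈ T.Wv (vs i) ∧
          w ⟨(i + 1) % k, Nat.mod_lt _ (lt_of_le_of_lt (Nat.zero_le _) i.isLt)⟩ ∈ T.Wv (vs i)) ∧
        (∀ i : Fin k, (Finset.univ.filter fun j => w j ∈ T.Wv (vs i)).card ≤ 2) := by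
  classical
  rintro ⟨k, hk3, w, vs, hwinj, hvinj, hmem, hcard⟩
  haveI : NeZero k := ⟨by omega⟩
  have hv1 : ((1 : Fin k) : ℕ) = 1 := by
    rw [Fin.val_one']; exact Nat.mod_eq_of_lt (by omega)
  have hv2 : (((1 : Fin k) + 1 : Fin k) : ℕ) = 2 := by
    rw [Fin.val_add, hv1]; exact Nat.mod_eq_of_lt (by omega)
  -- group identities in `Fin k`
  have hG1 : ∀ a : Fin k, a - 1 + 1 = a := fun a => by abel
  have hG2 : ∀ a : Fin k, a + 1 - 1 = a := fun a => by abel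
  have hG3 : ∀ a b : Fin k, a + (b - a) = b := fun a b => by abel
  -- disequalities
  have hne1 : ∀ i : Fin k, i + 1 ≠ i := by
    intro i h
    have h' : (1 : Fin k) = 0 := by
      have h2 : i + 1 = i + 0 := by rw [add_zero]; exact h
      exact add_left_cancel h2
    have := congrArg Fin.val h'
    rw [hv1, Fin.val_zero] at this; omega
  have hne2 : ∀ i : Fin k, i + 1 + 1 ≠ i := by
    intro i h
    have h' : (1 : Fin k) + 1 = 0 := by
      have h2 : i + (1 + 1) = i + 0 := by rw [add_zero, ← add_assoc]; exact h
      exact add_left_cancel h2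
    have := congrArg Fin.val h'
    rw [hv2, Fin.val_zero] at this; omega
  have hd_a : ∀ i : Fin k, i + 1 ≠ i - 1 := by
    intro i h; exact hne2 i (by rw [h, hG1])
  have hd_b : ∀ i : Fin k, i - 1 ≠ i := by
    intro i h
    have h2 := congrArg (· + 1) h
    rw [hG1] at h2
    exact hne1 i h2.symm
  have hd_c : ∀ i : Fin k, i ≠ i + 1 := fun i => Ne.symm (hne1 i)
  have hd_d : ∀ i : Fin k, i ≠ i + 1 + 1 := fun i => Ne.symm (hne2 i)
  -- membership facts
  have hmod : ∀ i : Fin k,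
      (⟨((i : ℕ) + 1) % k, Nat.mod_lt _ (lt_of_le_of_lt (Nat.zero_le _) i.isLt)⟩ : Fin k)
        = i + 1 := by
    intro i
    apply Fin.ext
    rw [Fin.val_add, hv1]
  have H1 : ∀ i, w i ∈ T.Wv (vs i) := fun i => (hmem i).1
  have H2 : ∀ i, w (i + 1) ∈ T.Wv (vs i) := fun i => by
    rw [← hmod i]; exact (hmem i).2
  have Hex : ∀ i j : Fin k, w j ∈ T.Wv (vs i) → j = i ∨ j = i + 1 := by
    intro i j hj
    by_contra hcon
    push_neg at hcon
    have hsub : ({j, i, i + 1} : Finset (Fin k)) ⊆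
        Finset.univ.filter (fun x => w x ∈ T.Wv (vs i)) := by
      intro x hx
      simp only [Finset.mem_insert, Finset.mem_singleton] at hx
      refine Finset.mem_filter.mpr ⟨Finset.mem_univ _, ?_⟩
      rcases hx with h | h | h <;> rw [h]
      · exact hj
      · exact H1 i
      · exact H2 i
    have hc3 : ({j, i, i + 1} : Finset (Fin k)).card = 3 := by
      rw [Finset.card_insert_of_notMem, Finset.card_insert_of_notMem,
        Finset.card_singleton]
      · simp only [Finset.mem_singleton]; exact hd_c i
      · simp only [Finset.mem_insert, Finset.mem_singleton]
        push_neg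
        exact ⟨hcon.1, hcon.2⟩
    have hle := Finset.card_le_card hsub
    rw [hc3] at hle
    have := hcard i
    omega
  have H2' : ∀ i, w i ∈ T.Wv (vs (i - 1)) := by
    intro i; have := H2 (i - 1); rwa [hG1] at this
  choose A hA1 hA2 using fun i => T.exists_engages (H2' i)
  choose B hB1 hB2 using fun i => T.exists_engages (H1 i)
  set P : Fin k → V := fun i => T.parent (B i) with hPdef
  have hPA : ∀ i, T.parent (A i) = P i := fun i => hnb.1 (w i) (A i) (B i) (hA1 i) (hB1 i)
  have hPv : ∀ i, T.anc (P i) (vs i) := fun i => T.anc_trans (T.anc_parent (B i)) (hB2 i)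
  have hPv' : ∀ i, T.anc (P i) (vs (i - 1)) := by
    intro i
    have h := T.anc_trans (T.anc_parent (A i)) (hA2 i)
    rwa [hPA i] at h
  have HexE : ∀ (i j : Fin k) (x : V), T.Engages (w j) x → T.anc x (vs i) →
      j = i ∨ j = i + 1 :=
    fun i j x he ha => Hex i j (T.mem_Wv_of_engages he ha)
  -- all the parents are equal
  have hstep : ∀ i : Fin k, T.depth (P (i + 1)) ≤ T.depth (P i) → P (i + 1) = P i := by
    intro i hd
    by_contra hne
    have hP1v : T.anc (P (i + 1)) (vs i) := by
      have := hPv' (i + 1); rwa [hG2] at this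
    have hanc : T.anc (P (i + 1)) (P i) := T.anc_of_depth_le (hPv i) hP1v hd
    have hlt : T.depth (P (i + 1)) < T.depth (P i) := T.depth_lt_of_anc hanc hne
    have hAroot : A (i + 1) ≠ T.root := (hA1 (i + 1)).1
    have hdA : T.depth (A (i + 1)) ≤ T.depth (P i) := by
      have := T.depth_child hAroot
      rw [hPA (i + 1)] at this; omega
    have hAv : T.anc (A (i + 1)) (vs i) := by
      have := hA2 (i + 1); rwa [hG2] at this
    have hAP : T.anc (A (i + 1)) (P i) := T.anc_of_depth_le (hPv i) hAv hdA
    have hAv' : T.anc (A (i + 1)) (vs (i - 1)) := T.anc_trans hAP (hPv' i)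
    rcases HexE (i - 1) (i + 1) (A (i + 1)) (hA1 (i + 1)) hAv' with h | h
    · exact hd_a i h
    · rw [hG1] at h; exact hne1 i h
  obtain ⟨i₀, -, hmax⟩ := Finset.exists_max_image Finset.univ
    (fun i => T.depth (P i)) ⟨0, Finset.mem_univ 0⟩
  have hmax' : ∀ j, T.depth (P j) ≤ T.depth (P i₀) := fun j => hmax j (Finset.mem_univ j)
  have hiter : ∀ n : ℕ, P (i₀ + (n : Fin k)) = P i₀ := by
    intro n
    induction n with
    | zero => simp
    | succ n ih =>
      have hst : P (i₀ + (n : Fin k) + 1) = P (i₀ + (n : Fin k)) :=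
        hstep _ (by rw [ih]; exact hmax' _)
      rw [Nat.cast_add, Nat.cast_one, ← add_assoc, hst, ih]
  have hPall : ∀ j, P j = P i₀ := by
    intro j
    have := hiter ((j - i₀ : Fin k) : ℕ)
    rwa [Fin.cast_val_eq_self, hG3] at this
  have hch : ∀ i, T.parent (B i) = P i₀ := fun i => hPall i
  have hchA : ∀ i, T.parent (A i) = P i₀ := fun i => (hPA i).trans (hPall i)
  -- consecutive witnesses are equal
  have hBA : ∀ i : Fin k, A (i + 1) = B i := by
    intro i
    by_contra hne
    have h1 : T.anc (A (i + 1)) (vs i) := by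
      have := hA2 (i + 1); rwa [hG2] at this
    have h2 : T.anc (B i) (vs i) := hB2 i
    rcases T.anc_total h1 h2 with hc | hc
    · exact T.not_anc_sibling ((hchA (i + 1)).trans (hch i).symm) (hA1 (i + 1)).1 hne hc
    · exact T.not_anc_sibling ((hch i).trans (hchA (i + 1)).symm) (hB1 i).1 (Ne.symm hne) hc
  have hE2 : ∀ i : Fin k, T.Engages (w (i + 1)) (B i) := by
    intro i; have := hA1 (i + 1); rwa [hBA i] at this
  have hCne : ∀ i j : Fin k, B i = B j → i = j := by
    intro i j hB
    by_contra hne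
    have h1 : i = j ∨ i = j + 1 :=
      HexE j i (B i) (hB1 i) (by rw [hB]; exact hB2 j)
    have h2 : j = i ∨ j = i + 1 :=
      HexE i j (B j) (hB1 j) (by rw [← hB]; exact hB2 i)
    rcases h1 with rfl | h1
    · exact hne rfl
    rcases h2 with rfl | h2
    · exact hne rfl
    exact hne2 i (by rw [← h2, ← h1])
  -- maximal element in the sibling order
  obtain ⟨m, -, hmax2⟩ := Finset.exists_max_image Finset.univ
    (fun i => (Finset.univ.filter fun j => T.lt (P i₀) (B j) (B i)).card) ⟨0, Finset.mem_univ 0⟩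
  have hnm : ∀ j, ¬ T.lt (P i₀) (B m) (B j) := by
    intro j hj
    have hsub : insert m (Finset.univ.filter fun x => T.lt (P i₀) (B x) (B m)) ⊆
        Finset.univ.filter fun x => T.lt (P i₀) (B x) (B j) := by
      intro x hx
      rcases Finset.mem_insert.mp hx with rfl | hx
      · exact Finset.mem_filter.mpr ⟨Finset.mem_univ _, hj⟩
      · exact Finset.mem_filter.mpr ⟨Finset.mem_univ _,
          T.lt_trans (P i₀) _ _ _ (Finset.mem_filter.mp hx).2 hj⟩
    have hnotmem : m ∉ Finset.univ.filter fun x => T.lt (P i₀) (B x) (B m) := by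
      simp only [Finset.mem_filter, Finset.mem_univ, true_and]
      exact T.lt_irrefl (P i₀) (B m)
    have hle := Finset.card_le_card hsub
    rw [Finset.card_insert_of_notMem hnotmem] at hle
    have := hmax2 j (Finset.mem_univ j)
    omega
  -- the final interval argument
  have hd1 : B (m - 1) ≠ B m := fun h => hd_b m (hCne _ _ h)
  have hd2 : B (m + 1) ≠ B m := fun h => hne1 m (hCne _ _ h)
  have hd3 : B (m + 1) ≠ B (m - 1) := fun h => hd_a m (hCne _ _ h)
  have lt1 : T.lt (P i₀) (B (m - 1)) (B m) := by
    rcases T.lt_total (P i₀) (B (m - 1)) (B m) (hch _) (hch _) hd1 with h | h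
    · exact h
    · exact absurd h (hnm (m - 1))
  have lt2 : T.lt (P i₀) (B (m + 1)) (B m) := by
    rcases T.lt_total (P i₀) (B (m + 1)) (B m) (hch _) (hch _) hd2 with h | h
    · exact h
    · exact absurd h (hnm (m + 1))
  rcases T.lt_total (P i₀) (B (m + 1)) (B (m - 1)) (hch _) (hch _) hd3 with hc | hc
  · -- w (m+1) engages B (m-1)
    have heng : T.Engages (w (m + 1)) (B (m - 1)) := by
      refine hnb.2 (w (m + 1)) (B (m + 1)) (B (m - 1)) (B m) (hB1 (m + 1)) (hE2 m)
        (hB1 (m - 1)).1 ((hch (m - 1)).trans (hch (m + 1)).symm) ?_ ?_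
      · rw [hch (m + 1)]; exact hc
      · rw [hch (m + 1)]; exact lt1
    rcases HexE (m - 1) (m + 1) (B (m - 1)) heng (hB2 (m - 1)) with h | h
    · exact hd_a m h
    · rw [hG1] at h; exact hne1 m h
  · -- w m engages B (m+1)
    have hEm : T.Engages (w m) (B (m - 1)) := by
      have := hE2 (m - 1); rwa [hG1] at this
    have heng : T.Engages (w m) (B (m + 1)) := by
      refine hnb.2 (w m) (B (m - 1)) (B (m + 1)) (B m) hEm (hB1 m)
        (hB1 (m + 1)).1 ((hch (m + 1)).trans (hch (m - 1)).symm) ?_ ?_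
      · rw [hch (m - 1)]; exact hc
      · rw [hch (m - 1)]; exact lt2
    rcases HexE (m + 1) m (B (m + 1)) heng (hB2 (m + 1)) with h | h
    · exact hd_c m h
    · exact hd_d m h

theorem techTree_neighbour_no_cycle_and_totally_balanced
    {V W : Type*} [Fintype V] [Fintype W] [DecidableEq V] [DecidableEq W]
    (T : TechTree V W) (hnb : T.NeighbourCondition) :
    -- (a) no cycle of length k ≥ 3 among the sets {W^v} in which no set of the
    -- cycle contains more than two of the cycle's workers
    (¬ ∃ (k : ℕ) (_ : 3 ≤ k) (w : Fin k → W) (vs : Fin k → V),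
        Function.Injective w ∧ Function.Injective (fun i => T.Wv (vs i)) ∧
        (∀ i : Fin k, w i ∈ T.Wv (vs i) ∧
          w ⟨(i + 1) % k, Nat.mod_lt _ (lt_of_le_of_lt (Nat.zero_le _) i.isLt)⟩ ∈ T.Wv (vs i)) ∧
        (∀ i : Fin k, (Finset.univ.filter fun j => w j ∈ T.Wv (vs i)).card ≤ 2)) ∧
    -- (b) the incidence matrix of {W^v : v ∈ V} is totally balanced, hence balanced
    (IsTotallyBalanced (Matrix.of fun (x : W) (S : {S : Finset W // S ∈ Finset.univ.image T.Wv}) =>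
        (if x ∈ S.1 then 1 else 0 : ℚ)) ∧
     IsBalanced (Matrix.of fun (x : W) (S : {S : Finset W // S ∈ Finset.univ.image T.Wv}) =>
        (if x ∈ S.1 then 1 else 0 : ℚ))) := by
  classical
  have partA := techTree_partA T hnb
  have hM1 : ∀ (x : W) (S : {S : Finset W // S ∈ Finset.univ.image T.Wv}),
      (Matrix.of fun (x : W) (S : {S : Finset W // S ∈ Finset.univ.image T.Wv}) =>
        (if x ∈ S.1 then 1 else 0 : ℚ)) x S = 1 ↔ x ∈ S.1 := by
    intro x S
    rw [Matrix.of_apply]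
    split_ifs with h
    · simp [h]
    · simp [h]
  refine ⟨partA, ?_, ?_⟩
  · -- totally balanced
    intro k hk3 r c hrinj hcinj hM
    choose vsf hvsf1 hvsf2 using fun j : Fin k => Finset.mem_image.mp (c j).2
    apply partA
    refine ⟨k, hk3, r, vsf, hrinj, ?_, ?_, ?_⟩
    · intro a b hab
      apply hcinj
      apply Subtype.ext
      simp only at hab
      rw [← hvsf2 a, ← hvsf2 b]
      exact hab
    · intro i
      constructor
      · rw [hvsf2 i, ← hM1 (r i) (c i)]
        exact (hM i i).mpr (Or.inl rfl)
      · rw [hvsf2 i,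
          ← hM1 (r ⟨((i : ℕ) + 1) % k, Nat.mod_lt _ (lt_of_le_of_lt (Nat.zero_le _) i.isLt)⟩) (c i)]
        exact (hM ⟨((i : ℕ) + 1) % k,
          Nat.mod_lt _ (lt_of_le_of_lt (Nat.zero_le _) i.isLt)⟩ i).mpr (Or.inr rfl)
    · intro i
      have hsub : (Finset.univ.filter fun j => r j ∈ T.Wv (vsf i)) ⊆
          {i, ⟨((i : ℕ) + 1) % k, Nat.mod_lt _ (lt_of_le_of_lt (Nat.zero_le _) i.isLt)⟩} := by
        intro x hx
        have hx2 := (Finset.mem_filter.mp hx).2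
        rw [hvsf2 i, ← hM1 (r x) (c i)] at hx2
        rcases (hM x i).mp hx2 with h | h
        · exact Finset.mem_insert.mpr (Or.inl (Fin.ext h))
        · exact Finset.mem_insert.mpr (Or.inr (Finset.mem_singleton.mpr (Fin.ext h)))
      calc (Finset.univ.filter fun j => r j ∈ T.Wv (vsf i)).card
          ≤ _ := Finset.card_le_card hsub
        _ ≤ 2 := (Finset.card_insert_le _ _).trans (by simp)
  · -- balanced
    intro k hk3 hodd r c hrinj hcinj hcond
    obtain ⟨hrowM, hcolM⟩ := hcond
    have hrow0 : ∀ i, (Finset.univ.filter fun j => r i ∈ (c j).1).card = 2 := by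
      intro i
      have he : Finset.univ.filter (fun j => (Matrix.of fun (x : W)
          (S : {S : Finset W // S ∈ Finset.univ.image T.Wv}) =>
          (if x ∈ S.1 then 1 else 0 : ℚ)) (r i) (c j) = 1)
          = Finset.univ.filter fun j => r i ∈ (c j).1 :=
        Finset.filter_congr fun x _ => hM1 (r i) (c x)
      rw [← he]
      exact hrowM i
    have hcol0 : ∀ j, (Finset.univ.filter fun i => r i ∈ (c j).1).card = 2 := by
      intro j
      have he : Finset.univ.filter (fun i => (Matrix.of fun (x : W)
          (S : {S : Finset W // S ∈ Finset.univ.image T.Wv}) =>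
          (if x ∈ S.1 then 1 else 0 : ℚ)) (r i) (c j) = 1)
          = Finset.univ.filter fun i => r i ∈ (c j).1 :=
        Finset.filter_congr fun x _ => hM1 (r x) (c j)
      rw [← he]
      exact hcolM j
    have hQex : ∃ t : ℕ, Odd t ∧ ∃ (r2 : Fin t → W)
        (c2 : Fin t → {S : Finset W // S ∈ Finset.univ.image T.Wv}),
        Function.Injective r2 ∧ Function.Injective c2 ∧
        (∀ i, (Finset.univ.filter fun j => r2 i ∈ (c2 j).1).card = 2) ∧
        (∀ j, (Finset.univ.filter fun i => r2 i ∈ (c2 j).1).card = 2) :=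
      ⟨k, hodd, r, c, hrinj, hcinj, hrow0, hcol0⟩
    set t := Nat.find hQex with htdef
    obtain ⟨hoddt, r', c', hr'inj, hc'inj, hR, hC⟩ := Nat.find_spec hQex
    have ht0 : 0 < t := by rcases hoddt with ⟨dd, hdd⟩; omega
    have ht3 : 3 ≤ t := by
      rcases Finset.card_eq_two.mp (hR ⟨0, ht0⟩) with ⟨x, y, hxy, -⟩
      by_contra hcon
      have hx := x.isLt
      have hy := y.isLt
      rcases hoddt with ⟨dd, hdd⟩
      exact hxy (Fin.ext (by omega))
    have hnonempty : ∃ jj : Fin t, r' ⟨0, ht0⟩ ∈ (c' jj).1 := by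
      have h2 := hR ⟨0, ht0⟩
      have h4 : (Finset.univ.filter fun j => r' ⟨0, ht0⟩ ∈ (c' j).1).Nonempty := by
        rw [← Finset.card_pos, h2]; omega
      obtain ⟨j, hj⟩ := h4
      exact ⟨j, (Finset.mem_filter.mp hj).2⟩
    obtain ⟨j₀, hj₀⟩ := hnonempty
    have hσex : ∀ e : {q : Fin t × Fin t // r' q.1 ∈ (c' q.2).1},
        ∃ e' : {q : Fin t × Fin t // r' q.1 ∈ (c' q.2).1}, e'.1.2 = e.1.2 ∧ e'.1.1 ≠ e.1.1 ∧
        ∀ f : {q : Fin t × Fin t // r' q.1 ∈ (c' q.2).1}, f.1.2 = e.1.2 → f = e ∨ f = e' := by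
      rintro ⟨⟨i, j⟩, he⟩
      obtain ⟨b, hbmem, hbne, hball⟩ := other_of_card_two (hC j)
        (Finset.mem_filter.mpr ⟨Finset.mem_univ i, he⟩)
      refine ⟨⟨(b, j), (Finset.mem_filter.mp hbmem).2⟩, rfl, hbne, ?_⟩
      rintro ⟨⟨x, y⟩, hf⟩ hy
      have hy2 : y = j := hy
      subst hy2
      rcases hball x (Finset.mem_filter.mpr ⟨Finset.mem_univ x, hf⟩) with h | h
      · subst h; exact Or.inl (Subtype.ext rfl)
      · subst h; exact Or.inr (Subtype.ext rfl)
    have hρex : ∀ e : {q : Fin t × Fin t // r' q.1 ∈ (c' q.2).1},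
        ∃ e' : {q : Fin t × Fin t // r' q.1 ∈ (c' q.2).1}, e'.1.1 = e.1.1 ∧ e'.1.2 ≠ e.1.2 ∧
        ∀ f : {q : Fin t × Fin t // r' q.1 ∈ (c' q.2).1}, f.1.1 = e.1.1 → f = e ∨ f = e' := by
      rintro ⟨⟨i, j⟩, he⟩
      obtain ⟨b, hbmem, hbne, hball⟩ := other_of_card_two (hR i)
        (Finset.mem_filter.mpr ⟨Finset.mem_univ j, he⟩)
      refine ⟨⟨(i, b), (Finset.mem_filter.mp hbmem).2⟩, rfl, hbne, ?_⟩
      rintro ⟨⟨x, y⟩, hf⟩ hx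
      have hx2 : x = i := hx
      subst hx2
      rcases hball y (Finset.mem_filter.mpr ⟨Finset.mem_univ y, hf⟩) with h | h
      · subst h; exact Or.inl (Subtype.ext rfl)
      · subst h; exact Or.inr (Subtype.ext rfl)
    choose σf hσcol hσrow hσall using hσex
    choose ρf hρrow hρcol hρall using hρex
    have hσ2 : ∀ e, σf (σf e) = e := by
      intro e
      rcases hσall e (σf (σf e)) (by rw [hσcol (σf e), hσcol e]) with h | h
      · exact h
      · exact absurd (congrArg (fun z : {q : Fin t × Fin t // r' q.1 ∈ (c' q.2).1} => z.1.1) h)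
          (hσrow (σf e))
    have hρ2 : ∀ e, ρf (ρf e) = e := by
      intro e
      rcases hρall e (ρf (ρf e)) (by rw [hρrow (ρf e), hρrow e]) with h | h
      · exact h
      · exact absurd (congrArg (fun z : {q : Fin t × Fin t // r' q.1 ∈ (c' q.2).1} => z.1.2) h)
          (hρcol (ρf e))
    have hρ1 : ∀ e, ρf e ≠ e := fun e h =>
      hρcol e (congrArg (fun z : {q : Fin t × Fin t // r' q.1 ∈ (c' q.2).1} => z.1.2) h)
    have hσ1 : ∀ e, σf e ≠ e := fun e h =>
      hσrow e (congrArg (fun z : {q : Fin t × Fin t // r' q.1 ∈ (c' q.2).1} => z.1.1) h)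
    have hρσ : ∀ e, ρf e ≠ σf e := fun e h =>
      hσrow e (by rw [← h]; exact hρrow e)
    obtain ⟨m, u, hm0, hu0, hustep, huper, huinj⟩ :=
      cycle_walk ρf σf hρ2 hσ2 hρ1 hσ1 ⟨(⟨0, ht0⟩, j₀), hj₀⟩
    have hue : ∀ n, u (2 * n + 1) = σf (u (2 * n)) := by
      intro n; rw [hustep, if_pos (by omega)]
    have huo : ∀ n, u (2 * n + 2) = ρf (u (2 * n + 1)) := by
      intro n
      rw [show 2 * n + 2 = (2 * n + 1) + 1 by ring, hustep, if_neg (by omega)]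
    have hm1 : m ≠ 1 := by
      intro h1
      have h4 : u 2 = u 0 := by rw [← huper, h1]
      have hh2 : u 1 = σf (u 0) := by have hq := hue 0; norm_num at hq; exact hq
      have hh3 : u 2 = ρf (u 1) := by have hq := huo 0; norm_num at hq; exact hq
      rw [hh3, hh2] at h4
      have h5 := congrArg ρf h4
      rw [hρ2] at h5
      exact hρσ (u 0) h5.symm
    rcases Nat.lt_or_ge m 3 with hmlt | hm3
    · -- m = 2 : remove the 2-cycle component, contradicting minimality of t
      have hm2 : m = 2 := by omega
      have hper4 : u 4 = u 0 := by rw [← huper, hm2]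
      have e1 : u 1 = σf (u 0) := by have hq := hue 0; norm_num at hq; exact hq
      have e2 : u 2 = ρf (u 1) := by have hq := huo 0; norm_num at hq; exact hq
      have e3 : u 3 = σf (u 2) := by have hq := hue 1; norm_num at hq; exact hq
      have e4 : u 4 = ρf (u 3) := by have hq := huo 1; norm_num at hq; exact hq
      set i0 := (u 0).1.1 with hi0
      set i1 := (u 1).1.1 with hi1
      set j0 := (u 0).1.2 with hj0
      set j1 := (u 2).1.2 with hj1
      have hcol1 : (u 1).1.2 = j0 := by rw [e1, hσcol]
      have hrow2 : (u 2).1.1 = i1 := by rw [e2, hρrow]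
      have hcol3 : (u 3).1.2 = j1 := by rw [e3, hσcol]
      have hrow3 : (u 3).1.1 = i0 := by
        have hq : (u 4).1.1 = (u 3).1.1 := by rw [e4, hρrow]
        rw [← hq, hper4]
      have hne_i : i1 ≠ i0 := by rw [hi1, e1]; exact hσrow (u 0)
      have hne_j : j1 ≠ j0 := by
        rw [hj1, e2, ← hcol1]; exact hρcol (u 1)
      have hρu0 : ρf (u 0) = u 3 := by rw [← hper4, e4, hρ2]
      have hcl1 : ∀ x : Fin t, r' x ∈ (c' j0).1 → x = i0 ∨ x = i1 := by
        intro x hx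
        rcases hσall (u 0) ⟨(x, j0), hx⟩ rfl with h | h
        · exact Or.inl (congrArg (fun z : {q : Fin t × Fin t // r' q.1 ∈ (c' q.2).1} => z.1.1) h)
        · rw [← e1] at h
          exact Or.inr (congrArg (fun z : {q : Fin t × Fin t // r' q.1 ∈ (c' q.2).1} => z.1.1) h)
      have hcl2 : ∀ x : Fin t, r' x ∈ (c' j1).1 → x = i0 ∨ x = i1 := by
        intro x hx
        rcases hσall (u 2) ⟨(x, j1), hx⟩ rfl with h | h
        · have hq : x = (u 2).1.1 :=
            congrArg (fun z : {q : Fin t × Fin t // r' q.1 ∈ (c' q.2).1} => z.1.1) h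
          rw [hrow2] at hq
          exact Or.inr hq
        · rw [← e3] at h
          have hq : x = (u 3).1.1 :=
            congrArg (fun z : {q : Fin t × Fin t // r' q.1 ∈ (c' q.2).1} => z.1.1) h
          rw [hrow3] at hq
          exact Or.inl hq
      have hcl3 : ∀ y : Fin t, r' i0 ∈ (c' y).1 → y = j0 ∨ y = j1 := by
        intro y hy
        rcases hρall (u 0) ⟨(i0, y), hy⟩ rfl with h | h
        · exact Or.inl (congrArg (fun z : {q : Fin t × Fin t // r' q.1 ∈ (c' q.2).1} => z.1.2) h)
        · rw [hρu0] at h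
          have hq : y = (u 3).1.2 :=
            congrArg (fun z : {q : Fin t × Fin t // r' q.1 ∈ (c' q.2).1} => z.1.2) h
          rw [hcol3] at hq
          exact Or.inr hq
      have hcl4 : ∀ y : Fin t, r' i1 ∈ (c' y).1 → y = j0 ∨ y = j1 := by
        intro y hy
        rcases hρall (u 1) ⟨(i1, y), hy⟩ rfl with h | h
        · have hq : y = (u 1).1.2 :=
            congrArg (fun z : {q : Fin t × Fin t // r' q.1 ∈ (c' q.2).1} => z.1.2) h
          rw [hcol1] at hq
          exact Or.inl hq
        · rw [← e2] at h
          exact Or.inr (congrArg (fun z : {q : Fin t × Fin t // r' q.1 ∈ (c' q.2).1} => z.1.2) h)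
      have hi1mem : i1 ∈ Finset.univ.erase i0 := Finset.mem_erase.mpr ⟨hne_i, Finset.mem_univ _⟩
      have hj1mem : j1 ∈ Finset.univ.erase j0 := Finset.mem_erase.mpr ⟨hne_j, Finset.mem_univ _⟩
      have hsRcard : ((Finset.univ.erase i0).erase i1).card = t - 2 := by
        rw [Finset.card_erase_of_mem hi1mem, Finset.card_erase_of_mem (Finset.mem_univ i0),
          Finset.card_univ, Fintype.card_fin]
        omega
      have hsCcard : ((Finset.univ.erase j0).erase j1).card = t - 2 := by
        rw [Finset.card_erase_of_mem hj1mem, Finset.card_erase_of_mem (Finset.mem_univ j0),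
          Finset.card_univ, Fintype.card_fin]
        omega
      have hmemR : ∀ x : Fin (t - 2),
          (((Finset.univ.erase i0).erase i1).orderIsoOfFin hsRcard x).1 ≠ i0 ∧
          (((Finset.univ.erase i0).erase i1).orderIsoOfFin hsRcard x).1 ≠ i1 := by
        intro x
        have hq := (((Finset.univ.erase i0).erase i1).orderIsoOfFin hsRcard x).2
        have h1 := Finset.mem_erase.mp hq
        exact ⟨(Finset.mem_erase.mp h1.2).1, h1.1⟩
      have hmemC : ∀ y : Fin (t - 2),
          (((Finset.univ.erase j0).erase j1).orderIsoOfFin hsCcard y).1 ≠ j0 ∧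
          (((Finset.univ.erase j0).erase j1).orderIsoOfFin hsCcard y).1 ≠ j1 := by
        intro y
        have hq := (((Finset.univ.erase j0).erase j1).orderIsoOfFin hsCcard y).2
        have h1 := Finset.mem_erase.mp hq
        exact ⟨(Finset.mem_erase.mp h1.2).1, h1.1⟩
      refine Nat.find_min hQex (show t - 2 < t by omega)
        ⟨by rcases hoddt with ⟨dd, hdd⟩; exact ⟨dd - 1, by omega⟩,
         fun x => r' (((Finset.univ.erase i0).erase i1).orderIsoOfFin hsRcard x).1,
         fun y => c' (((Finset.univ.erase j0).erase j1).orderIsoOfFin hsCcard y).1,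
         ?_, ?_, ?_, ?_⟩
      · intro a b h
        exact (((Finset.univ.erase i0).erase i1).orderIsoOfFin hsRcard).injective
          (Subtype.ext (hr'inj h))
      · intro a b h
        exact (((Finset.univ.erase j0).erase j1).orderIsoOfFin hsCcard).injective
          (Subtype.ext (hc'inj h))
      · intro x
        refine (Finset.card_bij (fun (y : Fin (t - 2)) _ =>
          (((Finset.univ.erase j0).erase j1).orderIsoOfFin hsCcard y).1)
          ?_ ?_ ?_).trans (hR (((Finset.univ.erase i0).erase i1).orderIsoOfFin hsRcard x).1)
        · intro y hy
          exact Finset.mem_filter.mpr ⟨Finset.mem_univ _, (Finset.mem_filter.mp hy).2⟩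
        · intro y1 h1 y2 h2 h
          exact (((Finset.univ.erase j0).erase j1).orderIsoOfFin hsCcard).injective
            (Subtype.ext h)
        · intro z hz
          have hz2 := (Finset.mem_filter.mp hz).2
          have hzj0 : z ≠ j0 := by
            rintro rfl
            rcases hcl1 _ hz2 with h | h
            · exact (hmemR x).1 h
            · exact (hmemR x).2 h
          have hzj1 : z ≠ j1 := by
            rintro rfl
            rcases hcl2 _ hz2 with h | h
            · exact (hmemR x).1 h
            · exact (hmemR x).2 h
          have hzmem : z ∈ (Finset.univ.erase j0).erase j1 :=
            Finset.mem_erase.mpr ⟨hzj1, Finset.mem_erase.mpr ⟨hzj0, Finset.mem_univ z⟩⟩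
          refine ⟨(((Finset.univ.erase j0).erase j1).orderIsoOfFin hsCcard).symm ⟨z, hzmem⟩,
            ?_, ?_⟩
          · refine Finset.mem_filter.mpr ⟨Finset.mem_univ _, ?_⟩
            beta_reduce
            rw [OrderIso.apply_symm_apply]
            exact hz2
          · beta_reduce
            rw [OrderIso.apply_symm_apply]
      · intro y
        refine (Finset.card_bij (fun (x : Fin (t - 2)) _ =>
          (((Finset.univ.erase i0).erase i1).orderIsoOfFin hsRcard x).1)
          ?_ ?_ ?_).trans (hC (((Finset.univ.erase j0).erase j1).orderIsoOfFin hsCcard y).1)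
        · intro x hx
          exact Finset.mem_filter.mpr ⟨Finset.mem_univ _, (Finset.mem_filter.mp hx).2⟩
        · intro x1 h1 x2 h2 h
          exact (((Finset.univ.erase i0).erase i1).orderIsoOfFin hsRcard).injective
            (Subtype.ext h)
        · intro z hz
          have hz2 := (Finset.mem_filter.mp hz).2
          have hzi0 : z ≠ i0 := by
            rintro rfl
            rcases hcl3 _ hz2 with h | h
            · exact (hmemC y).1 h
            · exact (hmemC y).2 h
          have hzi1 : z ≠ i1 := by
            rintro rfl
            rcases hcl4 _ hz2 with h | h
            · exact (hmemC y).1 h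
            · exact (hmemC y).2 h
          have hzmem : z ∈ (Finset.univ.erase i0).erase i1 :=
            Finset.mem_erase.mpr ⟨hzi1, Finset.mem_erase.mpr ⟨hzi0, Finset.mem_univ z⟩⟩
          refine ⟨(((Finset.univ.erase i0).erase i1).orderIsoOfFin hsRcard).symm ⟨z, hzmem⟩,
            ?_, ?_⟩
          · refine Finset.mem_filter.mpr ⟨Finset.mem_univ _, ?_⟩
            beta_reduce
            rw [OrderIso.apply_symm_apply]
            exact hz2
          · beta_reduce
            rw [OrderIso.apply_symm_apply]
    · -- m ≥ 3 : build a cycle, contradicting part (a)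
      have hrowinjN : ∀ a b : Fin m, a.val < b.val →
          (u (2 * a.val)).1.1 ≠ (u (2 * b.val)).1.1 := by
        intro a b hab h
        have hal := a.isLt
        have hbl := b.isLt
        rcases hρall (u (2 * b.val)) (u (2 * a.val)) h with h2 | h2
        · exact huinj (2 * a.val) (2 * b.val) (by omega) (by omega) h2
        · have hb1 : u (2 * b.val) = ρf (u (2 * b.val - 1)) := by
            have hh := huo (b.val - 1)
            rw [show 2 * (b.val - 1) + 2 = 2 * b.val by omega,
              show 2 * (b.val - 1) + 1 = 2 * b.val - 1 by omega] at hh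
            exact hh
          have h3 : ρf (u (2 * b.val)) = u (2 * b.val - 1) := by rw [hb1, hρ2]
          rw [h3] at h2
          exact huinj (2 * a.val) (2 * b.val - 1) (by omega) (by omega) h2
      have hrowinj : ∀ a b : Fin m, (u (2 * a.val)).1.1 = (u (2 * b.val)).1.1 → a = b := by
        intro a b h
        rcases lt_trichotomy a b with hl | hee | hl
        · exact absurd h (hrowinjN a b hl)
        · exact hee
        · exact absurd h.symm (hrowinjN b a hl)
      have hcolinj : ∀ a b : Fin m, (u (2 * a.val)).1.2 = (u (2 * b.val)).1.2 → a = b := by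
        intro a b h
        have hal := a.isLt
        have hbl := b.isLt
        by_contra hne
        have hvne : a.val ≠ b.val := fun hcc => hne (Fin.ext hcc)
        rcases hσall (u (2 * b.val)) (u (2 * a.val)) h with h2 | h2
        · rcases Nat.lt_or_ge a.val b.val with hl | hge
          · exact huinj _ _ (by omega) (by omega) h2
          · exact huinj _ _ (show 2 * b.val < 2 * a.val by omega) (by omega) h2.symm
        · rw [← hue b.val] at h2
          rcases Nat.lt_or_ge (2 * a.val) (2 * b.val + 1) with hl | hge
          · exact huinj _ _ hl (by omega) h2
          · exact huinj _ _ (show 2 * b.val + 1 < 2 * a.val by omega) (by omega) h2.symm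
      choose vsC hvsC1 hvsC2 using fun j : Fin t => Finset.mem_image.mp (c' j).2
      apply partA
      refine ⟨m, hm3, fun n => r' ((u (2 * n.val)).1.1), fun n => vsC ((u (2 * n.val)).1.2),
        ?_, ?_, ?_, ?_⟩
      · intro a b h
        exact hrowinj a b (hr'inj h)
      · intro a b h
        simp only at h
        rw [hvsC2, hvsC2] at h
        exact hcolinj a b (hc'inj (Subtype.ext h))
      · intro n
        have hnl := n.isLt
        constructor
        · show r' ((u (2 * n.val)).1.1) ∈ T.Wv (vsC ((u (2 * n.val)).1.2))
          rw [hvsC2]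
          exact (u (2 * n.val)).2
        · show r' ((u (2 * ((n.val + 1) % m))).1.1) ∈ T.Wv (vsC ((u (2 * n.val)).1.2))
          have hcol : (u (2 * n.val + 1)).1.2 = (u (2 * n.val)).1.2 := by
            rw [hue n.val]; exact hσcol _
          have hrow : (u (2 * ((n.val + 1) % m))).1.1 = (u (2 * n.val + 1)).1.1 := by
            rcases Nat.lt_or_ge (n.val + 1) m with hlt | hge
            · rw [Nat.mod_eq_of_lt hlt,
                show 2 * (n.val + 1) = 2 * n.val + 2 by ring, huo n.val, hρrow]
            · have hnm : n.val + 1 = m := by omega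
              have hmod0 : (n.val + 1) % m = 0 := by rw [hnm, Nat.mod_self]
              have h2m : u (2 * m) = ρf (u (2 * m - 1)) := by
                have hh := huo (m - 1)
                rw [show 2 * (m - 1) + 2 = 2 * m by omega,
                  show 2 * (m - 1) + 1 = 2 * m - 1 by omega] at hh
                exact hh
              have hq : (u 0).1.1 = (u (2 * m - 1)).1.1 := by
                rw [← huper, h2m, hρrow]
              rw [hmod0, show 2 * 0 = 0 by ring, hq, show 2 * m - 1 = 2 * n.val + 1 by omega]
          rw [hvsC2, hrow, ← hcol]
          exact (u (2 * n.val + 1)).2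
      · intro n
        show (Finset.univ.filter fun j : Fin m =>
          r' ((u (2 * j.val)).1.1) ∈ T.Wv (vsC ((u (2 * n.val)).1.2))).card ≤ 2
        have hmaps : ∀ x ∈ (Finset.univ.filter fun j : Fin m =>
            r' ((u (2 * j.val)).1.1) ∈ T.Wv (vsC ((u (2 * n.val)).1.2))),
            (u (2 * x.val)).1.1 ∈ Finset.univ.filter
              (fun i => r' i ∈ (c' ((u (2 * n.val)).1.2)).1) := by
          intro x hx
          have hx2 := (Finset.mem_filter.mp hx).2
          rw [hvsC2] at hx2
          exact Finset.mem_filter.mpr ⟨Finset.mem_univ _, hx2⟩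
        calc (Finset.univ.filter fun j : Fin m =>
            r' ((u (2 * j.val)).1.1) ∈ T.Wv (vsC ((u (2 * n.val)).1.2))).card
            ≤ (Finset.univ.filter fun i => r' i ∈ (c' ((u (2 * n.val)).1.2)).1).card :=
              Finset.card_le_card_of_injOn _ hmaps (fun x _ y _ h => hrowinj x y h)
          _ ≤ 2 := le_of_eq (hC _)
end

section
/- In a technology tree, if a cycle (w¹, S¹, …, w^k, S^k, w¹) of length k ≥ 3 among the sets {W^v} has no set containing three of its workers, then all workers w¹,…,w^k engage in upgrades leaving one common vertex of the tree. -/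
namespace TechTree

variable {V W : Type*} [DecidableEq W]

lemma parent_subset (T : TechTree V W) (v : V) :
    T.Wv (T.parent v) ⊆ T.Wv v := by
  by_cases h : v = T.root
  · subst h; rw [T.parent_root]
  · exact (T.W_mono v h).subset

lemma iterate_subset (T : TechTree V W) (n : ℕ) (v : V) :
    T.Wv (T.parent^[n] v) ⊆ T.Wv v := by
  induction n with
  | zero => simp
  | succ n ih =>
      rw [Function.iterate_succ_apply']
      exact (T.parent_subset _).trans ih

lemma exists_engage_aux (T : TechTree V W) (w : W) :
    ∀ n v, T.parent^[n] v = T.root → w ∈ T.Wv v →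
      ∃ m, T.Engages w (T.parent^[m] v) := by
  intro n
  induction n with
  | zero =>
      intro v hv hw
      simp only [Function.iterate_zero, id] at hv
      subst hv
      rw [T.W_root] at hw
      simp at hw
  | succ n ih =>
      intro v hv hw
      by_cases h : w ∈ T.Wv (T.parent v)
      · obtain ⟨m, hm⟩ := ih (T.parent v) (by rwa [← Function.iterate_succ_apply]) h
        exact ⟨m + 1, by rwa [Function.iterate_succ_apply]⟩
      · refine ⟨0, ?_, ?_⟩
        · simp only [Function.iterate_zero, id]
          rintro rfl
          rw [T.W_root] at hw
          simp at hw
        · simp only [Function.iterate_zero, id, Finset.mem_sdiff]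
          exact ⟨hw, h⟩

lemma exists_engage (T : TechTree V W) (w : W) (v : V) (hw : w ∈ T.Wv v) :
    ∃ m, T.Engages w (T.parent^[m] v) := by
  obtain ⟨n, hn⟩ := T.reach v
  exact T.exists_engage_aux w n v hn hw

end TechTree

theorem cycle_workers_engage_common_vertex
    {V W : Type*} [Fintype V] [Fintype W] [DecidableEq V] [DecidableEq W]
    (T : TechTree V W)
    -- each worker engages only in upgrades leaving a single vertex
    (hsingle : ∀ w v v', T.Engages w v → T.Engages w v' → T.parent v = T.parent v')
    (k : ℕ) (hk : 3 ≤ k) (w : Fin k → W) (vs : Fin k → V)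
    (hwinj : Function.Injective w)
    (hSinj : Function.Injective (fun i => T.Wv (vs i)))
    (hmem : ∀ i : Fin k, w i ∈ T.Wv (vs i) ∧
      w ⟨(i + 1) % k, Nat.mod_lt _ (lt_of_le_of_lt (Nat.zero_le _) i.isLt)⟩ ∈ T.Wv (vs i))
    -- no set of the cycle contains three of the cycle's workers
    (hno3 : ∀ i : Fin k, (Finset.univ.filter fun j => w j ∈ T.Wv (vs i)).card ≤ 2) :
    ∃ vt : V, ∀ (i : Fin k) (v : V), T.Engages (w i) v → T.parent v = vt := by
  haveI : NeZero k := ⟨by omega⟩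
  -- basic `Fin k` arithmetic
  have hval1 : (1 : Fin k).val = 1 := by
    rw [Fin.val_one']
    exact Nat.mod_eq_of_lt (by omega)
  have hadd1 : ∀ i : Fin k, ((i + 1 : Fin k)).val = (i.val + 1) % k := by
    intro i
    rw [Fin.add_def, hval1]
  have hvs : ∀ i : Fin k, (i + 1 : Fin k).val = if i.val + 1 = k then 0 else i.val + 1 := by
    intro i
    rw [hadd1]
    split
    · next h => rw [h, Nat.mod_self]
    · next h => exact Nat.mod_eq_of_lt (by omega; )
  have hne1 : ∀ i : Fin k, i ≠ i + 1 := by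
    intro i h
    have h3 := congrArg Fin.val h
    have h1 := hvs i
    have hik := i.isLt
    rw [h1] at h3
    split_ifs at h3 <;> omega
  have hne2 : ∀ i : Fin k, i ≠ i + 1 + 1 := by
    intro i h
    have h3 := congrArg Fin.val h
    have h1 := hvs i
    have h2 := hvs (i + 1)
    have hik := i.isLt
    rw [h2, h1] at h3
    split_ifs at h3 <;> omega
  have hmem' : ∀ i : Fin k, w i ∈ T.Wv (vs i) ∧ w (i + 1) ∈ T.Wv (vs i) := by
    intro i
    refine ⟨(hmem i).1, ?_⟩
    have h2 := (hmem i).2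
    have he : (⟨(↑i + 1) % k, Nat.mod_lt _ (lt_of_le_of_lt (Nat.zero_le _) i.isLt)⟩ : Fin k)
        = i + 1 := by
      apply Fin.ext
      rw [hadd1]
    rwa [he] at h2
  -- choose for each worker an engagement on the path from its own cycle set
  have hE : ∀ i : Fin k, ∃ m, T.Engages (w i) (T.parent^[m] (vs i)) :=
    fun i => T.exists_engage _ _ (hmem' i).1
  choose em hem using hE
  set P : Fin k → V := fun i => T.parent (T.parent^[em i] (vs i)) with hPdef
  have hP : ∀ i v, T.Engages (w i) v → T.parent v = P i :=
    fun i v h => hsingle _ _ _ h (hem i)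
  -- any set containing worker `w i` contains the whole set of its engagement parent
  have hPsub : ∀ (i : Fin k) (u : V), w i ∈ T.Wv u → T.Wv (P i) ⊆ T.Wv u := by
    intro i u hu
    obtain ⟨c, hc⟩ := T.exists_engage (w i) u hu
    have h1 : T.parent (T.parent^[c] u) = P i := hP i _ hc
    have h2 : T.parent^[c + 1] u = P i := by
      rw [Function.iterate_succ_apply']; exact h1
    rw [← h2]
    exact T.iterate_subset _ _
  -- no set of the cycle contains three consecutive workers
  have hcard : ∀ (t j : Fin k), w j ∈ T.Wv (vs t) → w (j + 1) ∈ T.Wv (vs t) →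
      w (j + 1 + 1) ∈ T.Wv (vs t) → False := by
    intro t j h1 h2 h3
    have hsub : ({j, j + 1, j + 1 + 1} : Finset (Fin k)) ⊆
        Finset.univ.filter (fun x => w x ∈ T.Wv (vs t)) := by
      intro x hx
      simp only [Finset.mem_insert, Finset.mem_singleton] at hx
      rcases hx with rfl | rfl | rfl <;>
        simp [Finset.mem_filter, h1, h2, h3]
    have hcard3 : ({j, j + 1, j + 1 + 1} : Finset (Fin k)).card = 3 := by
      rw [Finset.card_insert_of_notMem, Finset.card_insert_of_notMem,
        Finset.card_singleton]
      · simp [hne1 (j + 1)]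
      · simp [(hne1 j), (hne2 j)]
    have hle := Finset.card_le_card hsub
    have := hno3 t
    omega
  -- adjacent workers engage at the same parent
  have hadj : ∀ i : Fin k, P i = P (i + 1) := by
    intro i
    obtain ⟨b, hb⟩ := T.exists_engage (w (i + 1)) (vs i) (hmem' i).2
    have hb' : T.parent (T.parent^[b] (vs i)) = P (i + 1) := hP (i + 1) _ hb
    have ha' : T.parent (T.parent^[em i] (vs i)) = P i := hP i _ (hem i)
    rcases lt_trichotomy (em i) b with hab | hab | hab
    · exfalso
      have hwv : w (i + 1) ∈ T.Wv (P i) := by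
        have he : T.parent^[b] (vs i)
            = T.parent^[b - (em i + 1)] (T.parent^[em i + 1] (vs i)) := by
          rw [← Function.iterate_add_apply]
          congr 1
          omega
        have hp : T.parent^[em i + 1] (vs i) = P i := by
          rw [Function.iterate_succ_apply']
        have hmemb : w (i + 1) ∈ T.Wv (T.parent^[b] (vs i)) :=
          (Finset.mem_sdiff.mp hb.2).1
        rw [he, hp] at hmemb
        exact T.iterate_subset _ _ hmemb
      have hwi : w i ∈ T.Wv (vs (i - 1)) := by
        have h := (hmem' (i - 1)).2
        rwa [show i - 1 + 1 = i by abel] at h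
      have hfin : w (i + 1) ∈ T.Wv (vs (i - 1)) := hPsub i (vs (i - 1)) hwi hwv
      refine hcard (i - 1) (i - 1) (hmem' (i - 1)).1 ?_ ?_
      · rwa [show i - 1 + 1 = i by abel]
      · rwa [show i - 1 + 1 + 1 = i + 1 by abel]
    · rw [← ha', ← hb', hab]
    · exfalso
      have hwv : w i ∈ T.Wv (P (i + 1)) := by
        have he : T.parent^[em i] (vs i)
            = T.parent^[em i - (b + 1)] (T.parent^[b + 1] (vs i)) := by
          rw [← Function.iterate_add_apply]
          congr 1
          omega
        have hp : T.parent^[b + 1] (vs i) = P (i + 1) := by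
          rw [Function.iterate_succ_apply']; exact hb'
        have hmemb : w i ∈ T.Wv (T.parent^[em i] (vs i)) :=
          (Finset.mem_sdiff.mp (hem i).2).1
        rw [he, hp] at hmemb
        exact T.iterate_subset _ _ hmemb
      have hfin : w i ∈ T.Wv (vs (i + 1)) := hPsub (i + 1) (vs (i + 1)) (hmem' (i + 1)).1 hwv
      exact hcard (i + 1) i hfin (hmem' (i + 1)).1 (hmem' (i + 1)).2
  -- propagate around the cycle
  have hstep : ∀ n (hn : n + 1 < k), P ⟨n + 1, hn⟩ = P ⟨n, by omega⟩ := by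
    intro n hn
    have h := hadj ⟨n, by omega⟩
    have he : (⟨n, by omega⟩ : Fin k) + 1 = ⟨n + 1, hn⟩ := by
      apply Fin.ext
      rw [hadd1]
      simp [Nat.mod_eq_of_lt hn]
    rw [he] at h
    exact h.symm
  have hall : ∀ n (hn : n < k), P ⟨n, hn⟩ = P ⟨0, by omega⟩ := by
    intro n
    induction n with
    | zero => intro _; rfl
    | succ n ih => intro hn; rw [hstep n hn, ih (by omega)]
  refine ⟨P ⟨0, by omega⟩, ?_⟩
  intro i v h
  rw [hP i v h, ← hall i.val i.isLt]
end

section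
/- Consider a market Γ where firms have additive preferences, and the decomposed market Γ̄ in which each firm f is replaced by one firm per acceptable set of f (each new firm having exactly that one acceptable set), with workers' preferences extended by inserting the new firms at f's position, ordered according to f's preference over the corresponding acceptable sets. Then in any stable matching μ̄ of Γ̄, for each original firm f, at most one of the firms decomposed from f is matched to a nonempty set of workers. -/
/-!
Statement 12: In the decomposed market Γ̄ (each firm f replaced by one firm per
nonempty acceptable set of f, each new firm having exactly that acceptable set,
workers ranking the firms decomposed from the same f according to f's preference
over the corresponding acceptable sets), if the original firms' preferences are
additive, then in any stable matching of Γ̄ at most one of the firms decomposed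
from a given firm f is matched to a nonempty set of workers.
-/

namespace Stmt12

variable {W F : Type*} [Fintype W] [DecidableEq W] [DecidableEq F]

/-- The firms of the decomposed market: a firm `f` together with one of its
nonempty acceptable sets. -/
abbrev FBar (Ch : F → Finset W → Finset W) :=
  Σ f : F, {A : Finset W // A.Nonempty ∧ Ch f A = A}

/-- The set of workers matched to the decomposed firm `fb` under `μ`. -/
def assignedBar (Ch : F → Finset W → Finset W) (μ : W → Option (FBar Ch))
    (fb : FBar Ch) : Finset W :=
  Finset.univ.filter (fun w => μ w = some fb)

/-- Stability in the decomposed market: each decomposed firm `fb` has the single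
acceptable set `fb.2.1`, preferred to ∅ (all other sets unacceptable);
`wpb w o o'` means worker `w` strictly prefers `o` to `o'` (`none` = unmatched). -/
def StableBar (Ch : F → Finset W → Finset W)
    (wpb : W → Option (FBar Ch) → Option (FBar Ch) → Prop)
    (μ : W → Option (FBar Ch)) : Prop :=
  (∀ w fb, μ w = some fb → wpb w (some fb) none) ∧
  (∀ fb, assignedBar Ch μ fb = ∅ ∨ assignedBar Ch μ fb = fb.2.1) ∧
  (¬ ∃ fb : FBar Ch, assignedBar Ch μ fb ≠ fb.2.1 ∧
      ∀ w ∈ fb.2.1, μ w = some fb ∨ wpb w (some fb) (μ w))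

theorem at_most_one_decomposed_firm_matched
    (fpref : F → Finset W → Finset W → Prop)  -- firms' strict preferences in Γ
    (hfirr : ∀ f A, ¬ fpref f A A)
    (hftrans : ∀ f A B C, fpref f A B → fpref f B C → fpref f A C)
    (hftotal : ∀ f A B, A ≠ B → fpref f A B ∨ fpref f B A)
    (Ch : F → Finset W → Finset W)            -- firms' choice functions in Γ
    (hsub : ∀ f S, Ch f S ⊆ S)
    (hbest : ∀ f S, ∀ T ⊆ S, T ≠ Ch f S → fpref f (Ch f S) T)
    -- additivity: disjoint acceptable sets have acceptable union
    (hadd : ∀ f S S', Disjoint S S' → Ch f S = S → Ch f S' = S' → Ch f (S ∪ S') = S ∪ S')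
    (wpb : W → Option (FBar Ch) → Option (FBar Ch) → Prop)  -- workers' prefs in Γ̄
    (hwirr : ∀ w o, ¬ wpb w o o)
    (hwtrans : ∀ w o₁ o₂ o₃, wpb w o₁ o₂ → wpb w o₂ o₃ → wpb w o₁ o₃)
    (hwtotal : ∀ w o o', o ≠ o' → wpb w o o' ∨ wpb w o' o)
    -- firms decomposed from the same `f` are ranked by every worker according
    -- to `f`'s preference over the corresponding acceptable sets
    (hsame : ∀ (w : W) (f : F) (A A' : {A : Finset W // A.Nonempty ∧ Ch f A = A}),
      fpref f A.1 A'.1 → wpb w (some ⟨f, A⟩) (some ⟨f, A'⟩))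
    (μ : W → Option (FBar Ch)) (hstable : StableBar Ch wpb μ) :
    ∀ fb fb' : FBar Ch, fb.1 = fb'.1 →
      assignedBar Ch μ fb ≠ ∅ → assignedBar Ch μ fb' ≠ ∅ → fb = fb' := by
  obtain ⟨hIR, hacc, hblock⟩ := hstable
  rintro ⟨f, A, hA⟩ ⟨f', A', hA'⟩ (rfl : f = f') hne hne'
  -- assigned sets are the acceptable sets
  have h1 : assignedBar Ch μ ⟨f, A, hA⟩ = A :=
    (hacc ⟨f, A, hA⟩).resolve_left hne
  have h2 : assignedBar Ch μ ⟨f, A', hA'⟩ = A' :=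
    (hacc ⟨f, A', hA'⟩).resolve_left hne'
  have hmemA : ∀ w ∈ A, μ w = some ⟨f, A, hA⟩ := by
    intro w hw
    rw [← h1] at hw
    simpa [assignedBar] using hw
  have hmemA' : ∀ w ∈ A', μ w = some ⟨f, A', hA'⟩ := by
    intro w hw
    rw [← h2] at hw
    simpa [assignedBar] using hw
  by_cases hd : Disjoint A A'
  · -- build the blocking decomposed firm with acceptable set A ∪ A'
    exfalso
    have hU : Ch f (A ∪ A') = A ∪ A' := hadd f A A' hd hA.2 hA'.2
    have hUne : (A ∪ A').Nonempty := hA.1.mono Finset.subset_union_left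
    set fb'' : FBar Ch := ⟨f, ⟨A ∪ A', hUne, hU⟩⟩ with hfb''
    obtain ⟨a, ha⟩ := hA.1
    obtain ⟨a', ha'⟩ := hA'.1
    have hAneU : A ≠ A ∪ A' := by
      intro h
      have ha'A : a' ∈ A := by rw [h]; exact Finset.mem_union_right A ha'
      exact Finset.disjoint_left.mp hd ha'A ha'
    have hA'neU : A' ≠ A ∪ A' := by
      intro h
      have haA' : a ∈ A' := by rw [h]; exact Finset.mem_union_left A' ha
      exact Finset.disjoint_left.mp hd ha haA'
    have hpA : fpref f (A ∪ A') A := by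
      have := hbest f (A ∪ A') A Finset.subset_union_left (by rw [hU]; exact hAneU)
      rwa [hU] at this
    have hpA' : fpref f (A ∪ A') A' := by
      have := hbest f (A ∪ A') A' Finset.subset_union_right (by rw [hU]; exact hA'neU)
      rwa [hU] at this
    apply hblock
    refine ⟨fb'', ?_, ?_⟩
    · intro h
      have : a ∈ assignedBar Ch μ fb'' := by
        rw [h]; exact Finset.mem_union_left A' ha
      have hμ : μ a = some fb'' := by simpa [assignedBar] using this
      rw [hmemA a ha] at hμ
      have : A = A ∪ A' := congrArg (fun x : FBar Ch => x.2.1) (Option.some_injective _ hμ)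
      exact hAneU this
    · intro w hw
      rcases Finset.mem_union.mp hw with hwA | hwA'
      · right
        rw [hmemA w hwA]
        exact hsame w f ⟨A ∪ A', hUne, hU⟩ ⟨A, hA⟩ hpA
      · right
        rw [hmemA' w hwA']
        exact hsame w f ⟨A ∪ A', hUne, hU⟩ ⟨A', hA'⟩ hpA'
  · -- not disjoint: a common worker forces the firms to coincide
    obtain ⟨w, hwA, hwA'⟩ := Finset.not_disjoint_iff.mp hd
    have := (hmemA w hwA).symm.trans (hmemA' w hwA')
    exact Option.some_injective _ this


end Stmt12
end

section
/- If μ̄ is a stable matching in the decomposed market Γ̄ (firms split by acceptable sets) and firms in the original market Γ have additive preferences, then the matching μ defined by μ(f) = ∪_{f̄ ∈ H_f} μ̄(f̄) and μ(w) = f whenever μ̄(w) ∈ H_f is a stable matching of Γ. -/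
/-!
Statement 13: If μ̄ is a stable matching of the decomposed market Γ̄ (each firm
split into one firm per nonempty acceptable set) and firms in the original
market Γ have additive preferences, then the induced matching
μ(f) = ∪_{f̄ ∈ H_f} μ̄(f̄) (equivalently μ(w) = f whenever μ̄(w) ∈ H_f) is a
stable matching of Γ.
-/

namespace Stmt13

variable {W F : Type*} [Fintype W] [DecidableEq W] [DecidableEq F]

/-- The firms of the decomposed market: a firm `f` together with one of its
nonempty acceptable sets. -/
abbrev FBar (Ch : F → Finset W → Finset W) :=
  Σ f : F, {A : Finset W // A.Nonempty ∧ Ch f A = A}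

/-- The set of workers matched to the decomposed firm `fb` under `μ`. -/
def assignedBar (Ch : F → Finset W → Finset W) (μ : W → Option (FBar Ch))
    (fb : FBar Ch) : Finset W :=
  Finset.univ.filter (fun w => μ w = some fb)

/-- The set of workers matched to the firm `f` under a matching of Γ. -/
def assigned (μ : W → Option F) (f : F) : Finset W :=
  Finset.univ.filter (fun w => μ w = some f)

/-- Stability in the decomposed market Γ̄: each decomposed firm `fb` has the
single acceptable set `fb.2.1` preferred to ∅ (all other sets unacceptable). -/
def StableBar (Ch : F → Finset W → Finset W)
    (wpb : W → Option (FBar Ch) → Option (FBar Ch) → Prop)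
    (μ : W → Option (FBar Ch)) : Prop :=
  (∀ w fb, μ w = some fb → wpb w (some fb) none) ∧
  (∀ fb, assignedBar Ch μ fb = ∅ ∨ assignedBar Ch μ fb = fb.2.1) ∧
  (¬ ∃ fb : FBar Ch, assignedBar Ch μ fb ≠ fb.2.1 ∧
      ∀ w ∈ fb.2.1, μ w = some fb ∨ wpb w (some fb) (μ w))

/-- Stability in the original market Γ. -/
def Stable (Ch : F → Finset W → Finset W)
    (fpref : F → Finset W → Finset W → Prop)
    (wp : W → Option F → Option F → Prop)
    (μ : W → Option F) : Prop :=
  (∀ w f, μ w = some f → wp w (some f) none) ∧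
  (∀ f, Ch f (assigned μ f) = assigned μ f) ∧
  (¬ ∃ (f : F) (S : Finset W), fpref f S (assigned μ f) ∧
      ∀ w ∈ S, μ w = some f ∨ wp w (some f) (μ w))

theorem decomposed_stable_implies_stable
    (fpref : F → Finset W → Finset W → Prop)  -- firms' strict preferences in Γ
    (hfirr : ∀ f A, ¬ fpref f A A)
    (hftrans : ∀ f A B C, fpref f A B → fpref f B C → fpref f A C)
    (hftotal : ∀ f A B, A ≠ B → fpref f A B ∨ fpref f B A)
    (Ch : F → Finset W → Finset W)            -- firms' choice functions in Γ
    (hsub : ∀ f S, Ch f S ⊆ S)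
    (hbest : ∀ f S, ∀ T ⊆ S, T ≠ Ch f S → fpref f (Ch f S) T)
    -- additivity: disjoint acceptable sets have acceptable union
    (hadd : ∀ f S S', Disjoint S S' → Ch f S = S → Ch f S' = S' → Ch f (S ∪ S') = S ∪ S')
    (wp : W → Option F → Option F → Prop)     -- workers' strict preferences in Γ
    (hwirr : ∀ w o, ¬ wp w o o)
    (hwtrans : ∀ w o₁ o₂ o₃, wp w o₁ o₂ → wp w o₂ o₃ → wp w o₁ o₃)
    (hwtotal : ∀ w o o', o ≠ o' → wp w o o' ∨ wp w o' o)
    (wpb : W → Option (FBar Ch) → Option (FBar Ch) → Prop)  -- workers' prefs in Γ̄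
    (hwbirr : ∀ w o, ¬ wpb w o o)
    (hwbtrans : ∀ w o₁ o₂ o₃, wpb w o₁ o₂ → wpb w o₂ o₃ → wpb w o₁ o₃)
    (hwbtotal : ∀ w o o', o ≠ o' → wpb w o o' ∨ wpb w o' o)
    -- each firm is decomposed at its original position in each worker's list:
    -- comparisons across different original firms, and with being unmatched,
    -- agree with the original preferences
    (hcross : ∀ (w : W) (fb fb' : FBar Ch), fb.1 ≠ fb'.1 →
      (wpb w (some fb) (some fb') ↔ wp w (some fb.1) (some fb'.1)))
    (hnone : ∀ (w : W) (fb : FBar Ch),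
      (wpb w (some fb) none ↔ wp w (some fb.1) none) ∧
      (wpb w none (some fb) ↔ wp w none (some fb.1)))
    -- firms decomposed from the same `f` are ranked by every worker according
    -- to `f`'s preference over the corresponding acceptable sets
    (hsame : ∀ (w : W) (f : F) (A A' : {A : Finset W // A.Nonempty ∧ Ch f A = A}),
      fpref f A.1 A'.1 → wpb w (some ⟨f, A⟩) (some ⟨f, A'⟩))
    (μb : W → Option (FBar Ch)) (hstable : StableBar Ch wpb μb) :
    Stable Ch fpref wp (fun w => (μb w).map Sigma.fst) := by
  obtain ⟨hIR, hFibers, hNoBlock⟩ := hstable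
  set μ : W → Option F := fun w => (μb w).map Sigma.fst with hμdef
  have hμmem : ∀ w f, μ w = some f ↔ ∃ fb : FBar Ch, μb w = some fb ∧ fb.1 = f := by
    intro w f; simp [hμdef, Option.map_eq_some_iff]
  have hChEmpty : ∀ f, Ch f ∅ = ∅ := fun f => Finset.subset_empty.mp (hsub f ∅)
  have hmem : ∀ w fb, μb w = some fb → w ∈ assignedBar Ch μb fb := by
    intro w fb h; simp [assignedBar, h]
  have hfib : ∀ w fb, μb w = some fb → assignedBar Ch μb fb = fb.2.1 := by
    intro w fb h
    rcases hFibers fb with h0 | h1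
    · exact absurd (h0 ▸ hmem w fb h) (by simp)
    · exact h1
  -- key: closed unions of fibers are acceptable
  have key : ∀ (n : ℕ) (f : F) (S : Finset W), S.card ≤ n →
      (∀ w ∈ S, ∃ fb : FBar Ch, μb w = some fb ∧ fb.1 = f ∧ assignedBar Ch μb fb ⊆ S) →
      Ch f S = S := by
    intro n
    induction n with
    | zero =>
      intro f S hc _
      rw [Finset.card_eq_zero.mp (Nat.le_zero.mp hc)]; exact hChEmpty f
    | succ n ih =>
      intro f S hc hcl
      rcases S.eq_empty_or_nonempty with rfl | ⟨w, hw⟩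
      · exact hChEmpty f
      obtain ⟨fb, hμw, hf1, hsubS⟩ := hcl w hw
      have hA : assignedBar Ch μb fb = fb.2.1 := hfib w fb hμw
      have hAsub : fb.2.1 ⊆ S := hA ▸ hsubS
      have hAacc : Ch f fb.2.1 = fb.2.1 := hf1 ▸ fb.2.2.2
      have hAne : fb.2.1.Nonempty := fb.2.2.1
      have hrest : Ch f (S \ fb.2.1) = S \ fb.2.1 := by
        apply ih f
        · have h1 := Finset.card_sdiff_of_subset hAsub
          have h2 := Finset.card_pos.mpr hAne
          omega
        · intro w' hw'
          obtain ⟨hw'S, hw'A⟩ := Finset.mem_sdiff.mp hw'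
          obtain ⟨fb', hμw', hf1', hsubS'⟩ := hcl w' hw'S
          refine ⟨fb', hμw', hf1', ?_⟩
          intro x hx
          have hx' : μb x = some fb' := by
            simpa [assignedBar] using hx
          refine Finset.mem_sdiff.mpr ⟨hsubS' hx, ?_⟩
          intro hxA
          have hx2 : μb x = some fb := by
            have := hA ▸ hxA
            simpa [assignedBar] using this
          have hfbeq : fb' = fb := by
            have := hx'.symm.trans hx2
            exact Option.some_injective _ this
          apply hw'A
          have : w' ∈ assignedBar Ch μb fb := by
            rw [← hfbeq]; exact hmem w' fb' hμw'
          exact hA ▸ this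
      have hdisj : Disjoint fb.2.1 (S \ fb.2.1) := Finset.disjoint_sdiff
      have := hadd f fb.2.1 (S \ fb.2.1) hdisj hAacc hrest
      rwa [Finset.union_sdiff_of_subset hAsub] at this
  -- acceptability of assigned sets
  have hacc : ∀ f, Ch f (assigned μ f) = assigned μ f := by
    intro f
    apply key (assigned μ f).card f _ le_rfl
    intro w hw
    have hwf : μ w = some f := by simpa [assigned] using hw
    obtain ⟨fb, hμw, hf1⟩ := (hμmem w f).mp hwf
    refine ⟨fb, hμw, hf1, ?_⟩
    intro x hx
    have hx' : μb x = some fb := by simpa [assignedBar] using hx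
    have : μ x = some f := (hμmem x f).mpr ⟨fb, hx', hf1⟩
    simpa [assigned] using this
  have hCh_idem : ∀ f S, Ch f (Ch f S) = Ch f S := by
    intro f S
    by_contra hne
    have h1 : fpref f (Ch f S) (Ch f (Ch f S)) :=
      hbest f S (Ch f (Ch f S)) ((hsub f (Ch f S)).trans (hsub f S)) hne
    have h2 : fpref f (Ch f (Ch f S)) (Ch f S) :=
      hbest f (Ch f S) (Ch f S) le_rfl (Ne.symm hne)
    exact hfirr f _ (hftrans f _ _ _ h1 h2)
  refine ⟨?_, hacc, ?_⟩
  · -- worker individual rationality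
    intro w f hwf
    obtain ⟨fb, hμw, hf1⟩ := (hμmem w f).mp hwf
    have := ((hnone w fb).1).mp (hIR w fb hμw)
    rwa [hf1] at this
  · -- no blocking pair
    rintro ⟨f, S, hpref, hwk⟩
    set S' := Ch f S with hS'def
    have hS'sub : S' ⊆ S := hsub f S
    have hS'acc : Ch f S' = S' := hCh_idem f S
    have hprefS' : fpref f S' (assigned μ f) := by
      by_cases hSS : S = S'
      · rwa [← hSS]
      · exact hftrans f _ _ _ (hbest f S S le_rfl hSS) hpref
    have hS'ne : S'.Nonempty := by
      rcases S'.eq_empty_or_nonempty with h | h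
      · exfalso
        by_cases hA : assigned μ f = ∅
        · rw [hA, h] at hprefS'; exact hfirr f _ hprefS'
        · have h2 : fpref f (assigned μ f) S' := by
            have := hbest f (assigned μ f) ∅ (Finset.empty_subset _)
              (by rw [hacc f]; exact fun he => hA he.symm)
            rw [hacc f] at this; rwa [h]
          exact hfirr f _ (hftrans f _ _ _ hprefS' h2)
      · exact h
    set fb : FBar Ch := ⟨f, ⟨S', hS'ne, hS'acc⟩⟩ with hfbdef
    apply hNoBlock
    refine ⟨fb, ?_, ?_⟩
    · -- assignedBar fb ≠ S'
      intro heq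
      have hsub' : S' ⊆ assigned μ f := by
        intro x hx
        have hx' : μb x = some fb := by
          have : x ∈ assignedBar Ch μb fb := by rw [heq]; exact hx
          simpa [assignedBar] using this
        have : μ x = some f := (hμmem x f).mpr ⟨fb, hx', rfl⟩
        simpa [assigned] using this
      have hne' : S' ≠ assigned μ f := fun h => hfirr f _ (h ▸ hprefS')
      have h2 : fpref f (assigned μ f) S' := by
        have := hbest f (assigned μ f) S' hsub' (by rw [hacc f]; exact hne')
        rwa [hacc f] at this
      exact hfirr f _ (hftrans f _ _ _ hprefS' h2)
    · intro w hwS'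
      have hwS : w ∈ S := hS'sub hwS'
      cases h : μb w with
      | none =>
        right
        have hμwn : μ w = none := by simp [hμdef, h]
        have hwp : wp w (some f) none := by
          rcases hwk w hwS with h1 | h1
          · rw [hμwn] at h1; exact absurd h1 (by simp)
          · rwa [hμwn] at h1
        exact ((hnone w fb).1).mpr hwp
      | some fb' =>
        by_cases hfb : fb' = fb
        · left; rw [hfb]
        · right
          by_cases hf' : fb'.1 = f
          · -- same original firm, different acceptable set
            have hA' : assignedBar Ch μb fb' = fb'.2.1 := hfib w fb' h
            have hA'sub : fb'.2.1 ⊆ assigned μ f := by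
              intro x hx
              have hx' : μb x = some fb' := by
                have : x ∈ assignedBar Ch μb fb' := hA' ▸ hx
                simpa [assignedBar] using this
              have : μ x = some f := (hμmem x f).mpr ⟨fb', hx', hf'⟩
              simpa [assigned] using this
            have hprefA' : fpref f S' fb'.2.1 := by
              by_cases he : fb'.2.1 = assigned μ f
              · rw [he]; exact hprefS'
              · have h2 : fpref f (assigned μ f) fb'.2.1 := by
                  have := hbest f (assigned μ f) fb'.2.1 hA'sub
                    (by rw [hacc f]; exact he)
                  rwa [hacc f] at this
                exact hftrans f _ _ _ hprefS' h2
            obtain ⟨g, A'⟩ := fb'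
            have hg : g = f := hf'
            subst hg
            exact hsame w g ⟨S', hS'ne, hS'acc⟩ A' hprefA'
          · -- different original firm
            have hμwf : μ w = some fb'.1 := by simp [hμdef, h]
            have hwp : wp w (some f) (some fb'.1) := by
              rcases hwk w hwS with h1 | h1
              · exfalso
                rw [hμwf] at h1
                exact hf' (Option.some_injective _ h1)
              · rwa [hμwf] at h1
            exact (hcross w fb fb' (fun he => hf' he.symm)).mpr hwp

end Stmt13
end

section
/- Let f have a complementary preference and let W^K be the vertex set of a component of its complementarity graph G_f. Then for any S ⊆ W, Ch_f(S ∩ W^K) = Ch_f(S) ∩ W^K; i.e., f's choice restricted to a component is independent of workers outside the component. -/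
/-!
Statement 15: For a firm with a complementary preference and a component of its
complementarity graph with vertex set W^K, the choice restricted to the
component is independent of workers outside it: Ch(S ∩ W^K) = Ch(S) ∩ W^K.
-/

namespace Stmt15

variable {W : Type*} [DecidableEq W]

/-- Worker `w` belongs to `W_f`: she is in some acceptable set of the firm. -/
def InWf (Ch : Finset W → Finset W) (w : W) : Prop :=
  ∃ A, Ch A = A ∧ w ∈ A

/-- The edge relation of the complementarity graph `G_f`. -/
def Adj (Ch : Finset W → Finset W) (w w' : W) : Prop :=
  w ≠ w' ∧ ((∃ S, w ∉ Ch S ∧ w ∈ Ch (insert w' S)) ∨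
            (∃ S, w' ∉ Ch S ∧ w' ∈ Ch (insert w S)))

/-- One step along an edge of `G_f` (both endpoints in `W_f`). -/
def Step (Ch : Finset W → Finset W) (a b : W) : Prop :=
  InWf Ch a ∧ InWf Ch b ∧ Adj Ch a b

/-- `K` is the vertex set of a connected component of `G_f`. -/
def IsComponent (Ch : Finset W → Finset W) (K : Finset W) : Prop :=
  K.Nonempty ∧ (∀ w ∈ K, InWf Ch w) ∧
  (∀ w ∈ K, ∀ w', InWf Ch w' → Adj Ch w w' → w' ∈ K) ∧
  (∀ w ∈ K, ∀ w' ∈ K, Relation.ReflTransGen (Step Ch) w w')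

theorem choice_restricted_to_component
    (pref : Finset W → Finset W → Prop)   -- the firm's strict preference over sets
    (hirr : ∀ A, ¬ pref A A)
    (htrans : ∀ A B C, pref A B → pref B C → pref A C)
    (htotal : ∀ A B, A ≠ B → pref A B ∨ pref B A)
    (Ch : Finset W → Finset W)
    (hsub : ∀ S, Ch S ⊆ S)
    (hbest : ∀ S, ∀ T ⊆ S, T ≠ Ch S → pref (Ch S) T)
    -- complementary: the choice function is monotone
    (hcomp : ∀ S S', S ⊂ S' → Ch S ⊆ Ch S')
    (K : Finset W) (hK : IsComponent Ch K) :
    ∀ S : Finset W, Ch (S ∩ K) = Ch S ∩ K := by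
  obtain ⟨hKne, hKWf, hKclose, hKconn⟩ := hK
  have hanti : ∀ A B, pref A B → pref B A → False := fun A B h1 h2 =>
    hirr A (htrans A B A h1 h2)
  have heqCh : ∀ T S' : Finset W, T ⊆ S' → Ch S' ⊆ T → Ch T = Ch S' := by
    intro T S' hTS hChT
    by_contra hne
    exact hanti _ _ (hbest S' (Ch T) ((hsub T).trans hTS) hne)
      (hbest T (Ch S') hChT (Ne.symm hne))
  have hfix : ∀ S : Finset W, Ch (Ch S) = Ch S := fun S =>
    heqCh _ _ (hsub S) subset_rfl
  intro S
  have key : ∀ D : Finset W, D ⊆ S \ K → Ch ((S ∩ K) ∪ D) ∩ K = Ch (S ∩ K) := by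
    intro D
    induction D using Finset.induction_on with
    | empty =>
      intro _
      rw [Finset.union_empty]
      exact Finset.inter_eq_left.mpr ((hsub _).trans Finset.inter_subset_right)
    | @insert w' D hw' ih =>
      intro hins
      have hw'S : w' ∈ S \ K := hins (Finset.mem_insert_self _ _)
      have hw'K : w' ∉ K := (Finset.mem_sdiff.mp hw'S).2
      have ihD := ih (fun x hx => hins (Finset.mem_insert_of_mem hx))
      set T := (S ∩ K) ∪ D with hT
      have hset : (S ∩ K) ∪ insert w' D = insert w' T := by
        rw [hT, Finset.union_insert]
      rw [hset]
      have hw'T : w' ∉ T := by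
        rw [hT, Finset.mem_union, Finset.mem_inter]
        push_neg
        exact ⟨fun _ => hw'K, hw'⟩
      have hmonoT : Ch T ⊆ Ch (insert w' T) := hcomp _ _ (Finset.ssubset_insert hw'T)
      by_cases hw'Ch : w' ∈ Ch (insert w' T)
      · -- show Ch (insert w' T) ∩ K = Ch T ∩ K
        have hWf' : InWf Ch w' := ⟨Ch (insert w' T), hfix _, hw'Ch⟩
        have : Ch (insert w' T) ∩ K = Ch T ∩ K := by
          apply Finset.Subset.antisymm
          · intro w hw
            obtain ⟨hwCh, hwK⟩ := Finset.mem_inter.mp hw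
            by_contra hwT
            have hwT' : w ∉ Ch T := fun h => hwT (Finset.mem_inter.mpr ⟨h, hwK⟩)
            have hadj : Adj Ch w w' :=
              ⟨fun h => hw'K (h ▸ hwK), Or.inl ⟨T, hwT', hwCh⟩⟩
            exact hw'K (hKclose w hwK w' hWf' hadj)
          · exact Finset.inter_subset_inter hmonoT subset_rfl
        rw [this, ihD]
      · -- Ch (insert w' T) ⊆ T, hence Ch T = Ch (insert w' T)
        have hChsub : Ch (insert w' T) ⊆ T := by
          intro x hx
          rcases Finset.mem_insert.mp (hsub _ hx) with h | h
          · exact absurd (h ▸ hx) hw'Ch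
          · exact h
        rw [← heqCh T (insert w' T) (Finset.subset_insert _ _) hChsub, ihD]
  have := key (S \ K) subset_rfl
  rw [show S ∩ K ∪ S \ K = S by ext x; simp [Finset.mem_union, Finset.mem_inter, Finset.mem_sdiff]; tauto] at this
  exact this.symm

end Stmt15
end

section
/- In the market with firms f1, f2 and workers w1, w2 where f1's preference is {w1,w2} ≻ ∅, f2's preference is {w1} ≻ {w2} ≻ ∅, w1 prefers f1 to f2 (both acceptable), and w2 prefers f2 to f1 (both acceptable), no stable matching exists. -/
/-!
Statement 16: In the market with firms f1, f2 and workers w1, w2 where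
f1's preference is {w1,w2} ≻ ∅, f2's preference is {w1} ≻ {w2} ≻ ∅,
w1 prefers f1 to f2 (both acceptable), and w2 prefers f2 to f1 (both acceptable),
no stable matching exists.
-/

namespace Stmt16

abbrev Worker := Fin 2
abbrev Firm := Fin 2

/-- Firms' rankings over sets of workers; higher is better, sets ranked below 0
are unacceptable (worse than ∅). f1: {w1,w2} ≻ ∅; f2: {w1} ≻ {w2} ≻ ∅. -/
def frank : Firm → Finset Worker → ℤ
  | 0, S => if S = {0, 1} then 1 else if S = ∅ then 0 else -1
  | 1, S => if S = {0} then 2 else if S = {1} then 1 else if S = ∅ then 0 else -1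

/-- Worker rankings over `Option Firm` (`none` = unmatched); higher is better.
w1: f1 ≻ f2 ≻ ∅;  w2: f2 ≻ f1 ≻ ∅. -/
def wrank : Worker → Option Firm → ℤ
  | 0, some 0 => 2
  | 0, some 1 => 1
  | 0, none => 0
  | 1, some 1 => 2
  | 1, some 0 => 1
  | 1, none => 0

/-- The set of workers matched to firm `f` under matching `μ`. -/
def assigned (μ : Worker → Option Firm) (f : Firm) : Finset Worker :=
  Finset.univ.filter (fun w => μ w = some f)

/-- Individual rationality: each matched worker finds her firm acceptable, and
each firm's assignment is its choice from its assignment. -/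
def IndRat (μ : Worker → Option Firm) : Prop :=
  (∀ w, wrank w (μ w) ≥ wrank w none) ∧
  (∀ f, ∀ T ⊆ assigned μ f, frank f (assigned μ f) ≥ frank f T)

/-- Firm `f` and a set `S` of workers form a blocking coalition. -/
def Blocks (μ : Worker → Option Firm) (f : Firm) (S : Finset Worker) : Prop :=
  frank f S > frank f (assigned μ f) ∧ ∀ w ∈ S, wrank w (some f) ≥ wrank w (μ w)

/-- Stability. -/
def Stable (μ : Worker → Option Firm) : Prop :=
  IndRat μ ∧ ¬ ∃ f S, Blocks μ f S

theorem no_stable_matching : ¬ ∃ μ : Worker → Option Firm, Stable μ := by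
  unfold Stable IndRat Blocks assigned
  decide

end Stmt16
end
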